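/- arXiv:0806.0381 — 8 statements merged into one kernel-verified Lean document; each statement's English description precedes it below -/
import Mathlib

section
/- For every ε > 0 there exist k ∈ ℕ and ε' > 0 such that the following holds: for every nonempty finite set X, every finite collection F of functions X → [−1,1], every measure ν : X → ℝ that is ε'-pseudorandom according to F^k, and every measure g : X → ℝ with g(x) ≤ ν(x) for all x ∈ X, one can write g = g₁ + g₂ where g₁ : X → [0,1] is a bounded measure with E_{x∈X} g₁(x) = E_{x∈X} g(x), and g₂ : X → ℝ satisfies |⟨g₂, f⟩| ≤ ε for every f ∈ F. -/
/-!
If no bounded `h` with mean `𝔼 g` is `ε`-indistinguishable from `g` according to `F`, Hahn–Banach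
(applied to the vectors of correlations with `F`, in the sup norm) gives `φ = ∑ b_f f` with
`∑ |b_f| = 1` and `⟨g - h, φ⟩ > ε` for every such `h`. Taking for `h` a relaxed indicator of a level
set `{φ > t}` and using `0 ≤ g ≤ ν` gives `⟨g - h, φ⟩ ≤ ⟨ν - 1, (φ - t)₊⟩ + η`. Approximating
`y ↦ (y - t)₊` on `[-1, 1]` by polynomials whose degrees and coefficients are bounded uniformly in
`t` bounds this by the correlations of `ν - 1` with the powers `φ ^ j`, `1 ≤ j ≤ k`, and these
expand into correlations with products of at most `k` functions of `F`.
-/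

/-- Normalized inner product `⟨f,g⟩ = (1/|X|) ∑ₓ f(x) g(x)`. -/
noncomputable def ip (X : Type) [Fintype X] (f g : X → ℝ) : ℝ :=
  (∑ x, f x * g x) / (Fintype.card X)

/-- Expectation `E_{x∈X} g(x) = (1/|X|) ∑ₓ g(x)`. -/
noncomputable def ex (X : Type) [Fintype X] (g : X → ℝ) : ℝ :=
  (∑ x, g x) / (Fintype.card X)

/-- A measure on `X`: nonnegative with expectation at most 1. -/
def IsMeasure (X : Type) [Fintype X] (g : X → ℝ) : Prop :=
  (∀ x, 0 ≤ g x) ∧ ex X g ≤ 1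

/-- `F^k`: all products of at least one and at most `k` functions from `F`. -/
def FPow {X : Type} (F : Set (X → ℝ)) (k : ℕ) : Set (X → ℝ) :=
  {φ | ∃ l : List (X → ℝ), l ≠ [] ∧ l.length ≤ k ∧ (∀ f ∈ l, f ∈ F) ∧
        φ = fun x => (l.map (fun f => f x)).prod}

open Finset
open scoped BigOperators Pointwise Polynomial

section Expectation

variable {X : Type} [Fintype X]

lemma ex_eq_expect (g : X → ℝ) : ex X g = 𝔼 x, g x :=
  (Fintype.expect_eq_sum_div_card g).symm

lemma ip_eq_expect (f g : X → ℝ) : ip X f g = 𝔼 x, f x * g x :=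
  (Fintype.expect_eq_sum_div_card _).symm

end Expectation

lemma exists_uniform_polynomial_approx_relu {η : ℝ} (hη : 0 < η) (a b c d : ℝ) :
    ∃ (k : ℕ) (B : ℝ), 0 ≤ B ∧ ∀ t ∈ Set.Icc a b, ∃ p : ℝ[X], p.natDegree ≤ k ∧
      ∑ j ∈ range (k + 1), |p.coeff j| ≤ B ∧
      ∀ y ∈ Set.Icc c d, |p.eval y - max (y - t) 0| ≤ η := by
  choose p hp using fun τ : ℝ => exists_polynomial_near_of_continuousOn c d
    (fun y => max (y - τ) 0) (by fun_prop) (η / 2) (half_pos hη)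
  obtain ⟨T, -, hTfin, hcover⟩ :=
    finite_cover_balls_of_compact (isCompact_Icc (a := a) (b := b)) (half_pos hη)
  set P := hTfin.toFinset.image p
  set k := P.sup Polynomial.natDegree
  refine ⟨k, ∑ q ∈ P, ∑ j ∈ range (k + 1), |q.coeff j|, by positivity, fun t ht => ?_⟩
  obtain ⟨τ, hτT, htτ⟩ := Set.mem_iUnion₂.mp (hcover ht)
  have hτP : p τ ∈ P := mem_image_of_mem p (hTfin.mem_toFinset.mpr hτT)
  refine ⟨p τ, le_sup hτP, single_le_sum (f := fun q => ∑ j ∈ range (k + 1), |q.coeff j|)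
    (fun q _ => by positivity) hτP, fun y hy => ?_⟩
  calc |(p τ).eval y - max (y - t) 0|
      ≤ |(p τ).eval y - max (y - τ) 0| + |max (y - τ) 0 - max (y - t) 0| := abs_sub_le _ _ _
    _ ≤ η / 2 + |t - τ| := add_le_add (hp τ y hy).le
        ((abs_max_sub_max_le_abs _ _ _).trans_eq (by rw [sub_sub_sub_cancel_left]))
    _ ≤ η := by linarith [Metric.mem_ball.mp htτ, Real.dist_eq t τ]

lemma prod_mem_FPow {X : Type} {F : Set (X → ℝ)} {k j : ℕ} (hj : j ∈ Icc 1 k) (f : Fin j → X → ℝ)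
    (hf : ∀ i, f i ∈ F) : (fun x => ∏ i, f i x) ∈ FPow F k := by
  obtain ⟨hj1, hjk⟩ := mem_Icc.mp hj
  refine ⟨List.ofFn f, ?_, by simpa using hjk, ?_, ?_⟩
  · simpa [List.ofFn_eq_nil_iff] using Nat.one_le_iff_ne_zero.mp hj1
  · simpa [List.mem_ofFn] using hf
  · simp [List.map_ofFn, List.prod_ofFn, Function.comp_def]

section Correlations

variable {X : Type} [Fintype X]

lemma abs_expect_mul_eval_sub_le (w φ : X → ℝ) {p : ℝ[X]} {k : ℕ} (hp : p.natDegree ≤ k)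
    {ε' : ℝ} (hε' : 0 ≤ ε') (hpow : ∀ j ∈ Icc 1 k, |𝔼 x, w x * φ x ^ j| ≤ ε') :
    |𝔼 x, w x * p.eval (φ x) - p.coeff 0 * 𝔼 x, w x| ≤
      (∑ j ∈ range (k + 1), |p.coeff j|) * ε' := by
  have hexpand : 𝔼 x, w x * p.eval (φ x) =
      ∑ j ∈ range k, p.coeff (j + 1) * 𝔼 x, w x * φ x ^ (j + 1) + p.coeff 0 * 𝔼 x, w x := by
    simp_rw [Polynomial.eval_eq_sum_range' (Nat.lt_succ_of_le hp), mul_sum, expect_sum_comm,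
      mul_expect, mul_left_comm (w _)]
    simp [sum_range_succ']
  rw [hexpand, add_sub_cancel_right, sum_range_succ', add_mul]
  calc |∑ j ∈ range k, p.coeff (j + 1) * 𝔼 x, w x * φ x ^ (j + 1)|
      ≤ ∑ j ∈ range k, |p.coeff (j + 1)| * ε' := by
        refine (abs_sum_le_sum_abs _ _).trans (sum_le_sum fun j hj => ?_)
        rw [abs_mul]
        gcongr
        exact hpow _ (mem_Icc.mpr ⟨by omega, by simp at hj; omega⟩)
    _ ≤ (∑ j ∈ range k, |p.coeff (j + 1)|) * ε' + |p.coeff 0| * ε' := by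
        rw [sum_mul]; linarith [mul_nonneg (abs_nonneg (p.coeff 0)) hε']

lemma abs_expect_mul_pow_le {F : Set (X → ℝ)} {k : ℕ} {w : X → ℝ} {ε' : ℝ}
    (hw : ∀ f ∈ FPow F k, |𝔼 x, w x * f x| ≤ ε') {ι : Type*} [Fintype ι] {f : ι → X → ℝ}
    (hf : ∀ i, f i ∈ F) {b : ι → ℝ} (hb : ∑ i, |b i| = 1) {j : ℕ} (hj : j ∈ Icc 1 k) :
    |𝔼 x, w x * (∑ i, b i * f i x) ^ j| ≤ ε' := by
  have hexpand : 𝔼 x, w x * (∑ i, b i * f i x) ^ j =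
      ∑ u : Fin j → ι, (∏ m, b (u m)) * 𝔼 x, w x * ∏ m, f (u m) x := by
    simp_rw [Fintype.sum_pow, prod_mul_distrib, mul_sum, expect_sum_comm, mul_expect,
      mul_left_comm (w _)]
  calc |𝔼 x, w x * (∑ i, b i * f i x) ^ j|
      ≤ ∑ u : Fin j → ι, (∏ m, |b (u m)|) * ε' := by
        rw [hexpand]
        refine (abs_sum_le_sum_abs _ _).trans (sum_le_sum fun u _ => ?_)
        rw [abs_mul, abs_prod]
        gcongr
        exact hw _ (prod_mem_FPow hj _ fun m => hf (u m))
    _ = ε' := by rw [← sum_mul, ← Fintype.sum_pow (fun i => |b i|), hb, one_pow, one_mul]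

end Correlations

lemma max_sub_le_clamp_mul (u : ℝ) {η : ℝ} (hη : 0 < η) :
    max u 0 - η ≤ max 0 (min 1 (u / η)) * u := by
  rcases le_total u 0 with hu | hu
  · rw [max_eq_right hu, max_eq_left (min_le_of_right_le (div_nonpos_of_nonpos_of_nonneg hu hη.le))]
    linarith
  rcases le_total η u with hηu | huη
  · rw [max_eq_left hu, min_eq_left ((one_le_div hη).mpr hηu), max_eq_right zero_le_one]
    linarith
  · have : 0 ≤ max 0 (min 1 (u / η)) * u := mul_nonneg (le_max_left _ _) hu
    linarith [max_eq_left hu]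

lemma exists_relaxed_threshold {X : Type} [Fintype X] [Nonempty X] {φ : X → ℝ} {a b : ℝ}
    (hφ : ∀ x, φ x ∈ Set.Icc a b) {δ η : ℝ} (hδ : δ ∈ Set.Icc 0 1) (hη : 0 < η) :
    ∃ t ∈ Set.Icc (a - η) b, ∃ h : X → ℝ, h ∈ Set.Icc 0 1 ∧ 𝔼 x, h x = δ ∧
      ∀ x, max (φ x - t) 0 - η ≤ h x * (φ x - t) := by
  set H : ℝ → X → ℝ := fun s x => max 0 (min 1 ((φ x - s) / η))
  have hcont : Continuous fun s => 𝔼 x, H s x := by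
    simp_rw [H, Fintype.expect_eq_sum_div_card]; fun_prop
  have hab : a - η ≤ b := by
    obtain ⟨ha, hb⟩ := hφ (Classical.arbitrary X); linarith
  have hleft : 𝔼 x, H (a - η) x = 1 := by
    refine (expect_congr rfl fun x _ => ?_).trans (Fintype.expect_const 1)
    have : 1 ≤ (φ x - (a - η)) / η := (one_le_div hη).mpr (by linarith [(hφ x).1])
    simp [H, min_eq_left this]
  have hright : 𝔼 x, H b x = 0 := by
    refine expect_eq_zero fun x _ => ?_
    have : (φ x - b) / η ≤ 0 := div_nonpos_of_nonpos_of_nonneg (by linarith [(hφ x).2]) hη.le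
    simp [H, min_eq_right (this.trans zero_le_one), this]
  obtain ⟨t, ht, hδt⟩ := intermediate_value_Icc' hab hcont.continuousOn
    (by rwa [hleft, hright])
  refine ⟨t, ht, H t, ⟨fun x => le_max_left _ _, fun x => max_le zero_le_one (min_le_left _ _)⟩,
    hδt, fun x => max_sub_le_clamp_mul _ hη⟩

lemma exists_mem_forall_abs_sub_le_of_forall_exists {ι : Type*} [Fintype ι] {K : Set (ι → ℝ)}
    (hKc : IsCompact K) (hKcv : Convex ℝ K) (hKne : K.Nonempty) {v : ι → ℝ} {ε : ℝ}
    (hε : 0 ≤ ε) (H : ∀ b : ι → ℝ, ∑ i, |b i| = 1 → ∃ y ∈ K, ∑ i, b i * (v i - y i) ≤ ε) :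
    ∃ y ∈ K, ∀ i, |v i - y i| ≤ ε := by
  classical
  by_contra! hfar
  have hvS : v ∉ K + Metric.closedBall (0 : ι → ℝ) ε := by
    rintro ⟨y, hy, z, hz, rfl⟩
    obtain ⟨i, hi⟩ := hfar y hy
    simp only [Pi.add_apply, add_sub_cancel_left, ← Real.norm_eq_abs] at hi
    exact hi.not_ge ((norm_le_pi_norm z i).trans (mem_closedBall_zero_iff.mp hz))
  obtain ⟨Φ, u, hΦS, hΦv⟩ := geometric_hahn_banach_closed_point
    (hKcv.add (convex_closedBall _ _)) (hKc.add (isCompact_closedBall _ _)).isClosed hvS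
  set a : ι → ℝ := fun i => Φ fun j => if i = j then 1 else 0
  have hΦ : ∀ z, Φ z = ∑ i, a i * z i := fun z => by
    simpa [mul_comm] using LinearMap.pi_apply_eq_sum_univ (Φ : (ι → ℝ) →ₗ[ℝ] ℝ) z
  -- `Φ` at `y + ε • sign a ∈ K + closedBall 0 ε` exceeds `Φ y` by `ε * ∑ i, |a i|`
  have hsep : ∀ y ∈ K, ∑ i, a i * y i + ε * ∑ i, |a i| < ∑ i, a i * v i := by
    intro y hy
    have hz : ε • (fun i => (SignType.sign (a i) : ℝ)) ∈ Metric.closedBall 0 ε := by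
      refine mem_closedBall_zero_iff.mpr ((pi_norm_le_iff_of_nonneg hε).mpr fun i => ?_)
      rw [Pi.smul_apply, norm_smul, Real.norm_of_nonneg hε]
      exact mul_le_of_le_one_right hε (by rcases SignType.sign (a i) with _ | _ | _ <;> simp)
    have := hΦS _ (Set.add_mem_add hy hz)
    rw [map_add, map_smul, hΦ, hΦ] at this
    simp only [smul_eq_mul, self_mul_sign] at this
    linarith [hΦ v]
  obtain ⟨y₀, hy₀⟩ := hKne
  have hs : 0 < ∑ i, |a i| := by
    refine (sum_nonneg fun i _ => abs_nonneg (a i)).lt_of_ne fun hs => ?_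
    have ha : ∀ i, a i = 0 := fun i =>
      abs_eq_zero.mp ((sum_eq_zero_iff_of_nonneg fun i _ => abs_nonneg _).mp hs.symm i (mem_univ i))
    simpa [ha] using hsep y₀ hy₀
  obtain ⟨y, hy, hle⟩ := H (fun i => a i / ∑ i, |a i|) (by
    simp_rw [abs_div, abs_of_pos hs, ← sum_div, div_self hs.ne'])
  have : ε * ∑ i, |a i| < ∑ i, a i * (v i - y i) := by
    simp only [mul_sub, sum_sub_distrib]; linarith [hsep y hy]
  simp_rw [div_mul_eq_mul_div, ← sum_div] at hle
  rw [div_le_iff₀ hs] at hle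
  linarith

lemma exists_mem_forall_abs_expect_sub_mul_le {X : Type} [Fintype X] {K : Set (X → ℝ)}
    (hKc : IsCompact K) (hKcv : Convex ℝ K) (hKne : K.Nonempty) {ι : Type*} [Fintype ι]
    (f : ι → X → ℝ) (g : X → ℝ) {ε : ℝ} (hε : 0 ≤ ε)
    (H : ∀ b : ι → ℝ, ∑ i, |b i| = 1 → ∃ h ∈ K, 𝔼 x, (g x - h x) * ∑ i, b i * f i x ≤ ε) :
    ∃ h ∈ K, ∀ i, |𝔼 x, (g x - h x) * f i x| ≤ ε := by
  let L : (X → ℝ) →ₗ[ℝ] ι → ℝ :=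
    { toFun := fun h i => 𝔼 x, h x * f i x
      map_add' := fun p q => by simp only [Pi.add_apply, add_mul, expect_add_distrib]; rfl
      map_smul' := fun c p => by
        simp only [Pi.smul_apply, smul_eq_mul, mul_assoc, ← mul_expect]; rfl }
  have hL : ∀ h i, L g i - L h i = 𝔼 x, (g x - h x) * f i x := fun h i => by
    simp only [L, LinearMap.coe_mk, AddHom.coe_mk, sub_mul, expect_sub_distrib]
  obtain ⟨_, ⟨h, hK, rfl⟩, hclose⟩ := exists_mem_forall_abs_sub_le_of_forall_exists
    (hKc.image L.continuous_of_finiteDimensional) (hKcv.linear_image L) (hKne.image L) hε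
    (v := L g) fun b hb => by
      obtain ⟨h, hK, hle⟩ := H b hb
      refine ⟨L h, Set.mem_image_of_mem L hK, le_of_eq_of_le ?_ hle⟩
      simp_rw [hL, mul_expect, mul_sum, expect_sum_comm, mul_left_comm (b _)]
  exact ⟨h, hK, fun i => (hL h i) ▸ hclose i⟩

def boundedWithMean (X : Type) [Fintype X] (δ : ℝ) : Set (X → ℝ) :=
  Set.Icc 0 1 ∩ {h | 𝔼 x, h x = δ}

section BoundedWithMean

variable {X : Type} [Fintype X]

lemma isCompact_boundedWithMean (δ : ℝ) : IsCompact (boundedWithMean X δ) :=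
  isCompact_Icc.inter_right (isClosed_eq
    (by simp_rw [Fintype.expect_eq_sum_div_card]; fun_prop) continuous_const)

lemma convex_boundedWithMean (δ : ℝ) : Convex ℝ (boundedWithMean X δ) := by
  refine (convex_Icc 0 1).inter fun p hp q hq a b _ _ hab => ?_
  simp only [Set.mem_ofPred_eq, Pi.add_apply, Pi.smul_apply, smul_eq_mul] at hp hq ⊢
  rw [expect_add_distrib, ← mul_expect, ← mul_expect, hp, hq, ← add_mul, hab, one_mul]

lemma const_mem_boundedWithMean [Nonempty X] {δ : ℝ} (hδ : δ ∈ Set.Icc 0 1) :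
    (fun _ => δ) ∈ boundedWithMean X δ :=
  ⟨⟨fun _ => hδ.1, fun _ => hδ.2⟩, Fintype.expect_const δ⟩

end BoundedWithMean

lemma expect_mem_Icc_of_le {X : Type} [Fintype X] {g ν : X → ℝ} (hg0 : ∀ x, 0 ≤ g x)
    (hgν : ∀ x, g x ≤ ν x) (hν1 : 𝔼 x, ν x ≤ 1) : 𝔼 x, g x ∈ Set.Icc 0 1 :=
  ⟨expect_nonneg fun x _ => hg0 x, (expect_le_expect fun x _ => hgν x).trans hν1⟩

section DenseModel

variable {X : Type} [Fintype X] [Nonempty X]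

lemma expect_sub_mul_le_of_threshold {g h ν φ : X → ℝ} {t η : ℝ} (hg0 : ∀ x, 0 ≤ g x)
    (hgν : ∀ x, g x ≤ ν x) (hmean : 𝔼 x, h x = 𝔼 x, g x)
    (hthr : ∀ x, max (φ x - t) 0 - η ≤ h x * (φ x - t)) :
    𝔼 x, (g x - h x) * φ x ≤ 𝔼 x, (ν x - 1) * max (φ x - t) 0 + η := by
  have hpt : ∀ x, (g x - h x) * φ x ≤ (ν x - 1) * max (φ x - t) 0 + η + t * (g x - h x) := by
    intro x
    have hg : g x * (φ x - t) ≤ ν x * max (φ x - t) 0 :=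
      (mul_le_mul_of_nonneg_left (le_max_left _ _) (hg0 x)).trans
        (mul_le_mul_of_nonneg_right (hgν x) (le_max_right _ _))
    linarith [hthr x]
  calc 𝔼 x, (g x - h x) * φ x
      ≤ 𝔼 x, ((ν x - 1) * max (φ x - t) 0 + η + t * (g x - h x)) :=
        expect_le_expect fun x _ => hpt x
    _ = 𝔼 x, (ν x - 1) * max (φ x - t) 0 + η := by
        rw [expect_add_distrib, expect_add_distrib, ← mul_expect, expect_sub_distrib, hmean,
          sub_self, mul_zero, add_zero, Fintype.expect_const]

lemma expect_mul_relu_le {ν φ : X → ℝ} (hν0 : ∀ x, 0 ≤ ν x) (hν1 : 𝔼 x, ν x ≤ 1)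
    (hφ : ∀ x, φ x ∈ Set.Icc (-1) 1) {t η ε' : ℝ} {k : ℕ} {p : ℝ[X]} (hpk : p.natDegree ≤ k)
    (hp : ∀ y ∈ Set.Icc (-1) 1, |p.eval y - max (y - t) 0| ≤ η) (hε' : 0 ≤ ε')
    (hpow : ∀ j ∈ Icc 1 k, |𝔼 x, (ν x - 1) * φ x ^ j| ≤ ε') :
    𝔼 x, (ν x - 1) * max (φ x - t) 0 ≤ 3 * η + (∑ j ∈ range (k + 1), |p.coeff j|) * ε' := by
  have hν0' : 0 ≤ 𝔼 x, ν x := expect_nonneg fun x _ => hν0 x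
  have hp0 := abs_le.mp (hp 0 ⟨by norm_num, by norm_num⟩)
  have hη : 0 ≤ η := by linarith [hp0.1, hp0.2]
  have herr : 𝔼 x, (ν x - 1) * (max (φ x - t) 0 - p.eval (φ x)) ≤ 2 * η := by
    have hpt : ∀ x, (ν x - 1) * (max (φ x - t) 0 - p.eval (φ x)) ≤ η * ν x + η := fun x => by
      have hν : |ν x - 1| ≤ ν x + 1 := abs_le.mpr ⟨by linarith [hν0 x], by linarith⟩
      calc (ν x - 1) * (max (φ x - t) 0 - p.eval (φ x))
          ≤ |ν x - 1| * |max (φ x - t) 0 - p.eval (φ x)| := (le_abs_self _).trans (abs_mul _ _).le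
        _ ≤ (ν x + 1) * η := mul_le_mul hν (by rw [abs_sub_comm]; exact hp _ (hφ x))
            (abs_nonneg _) (by linarith [hν0 x])
        _ = η * ν x + η := by ring
    calc _ ≤ 𝔼 x, (η * ν x + η) := expect_le_expect fun x _ => hpt x
      _ ≤ 2 * η := by
          rw [expect_add_distrib, ← mul_expect, Fintype.expect_const]
          nlinarith
  -- `F^k` does not control `𝔼 ν - 1`; only its sign is used, against `p.coeff 0 ≥ -η`
  have hconst : p.coeff 0 * 𝔼 x, (ν x - 1) ≤ η := by
    rw [← Polynomial.coeff_zero_eq_eval_zero] at hp0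
    rw [expect_sub_distrib, Fintype.expect_const]
    nlinarith [hp0.1, le_max_right (0 - t) 0]
  have hpoly := (le_abs_self _).trans
    (abs_expect_mul_eval_sub_le (fun x => ν x - 1) φ hpk hε' hpow)
  calc 𝔼 x, (ν x - 1) * max (φ x - t) 0
      = 𝔼 x, (ν x - 1) * (max (φ x - t) 0 - p.eval (φ x)) +
          𝔼 x, (ν x - 1) * p.eval (φ x) := by
        rw [← expect_add_distrib]; simp only [mul_sub, sub_add_cancel]
    _ ≤ 3 * η + (∑ j ∈ range (k + 1), |p.coeff j|) * ε' := by linarith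

lemma exists_mem_boundedWithMean_expect_sub_mul_le {k : ℕ} {B η ε' : ℝ} (hη : 0 < η)
    (hε' : 0 ≤ ε') (happrox : ∀ t ∈ Set.Icc (-1 - η) 1, ∃ p : ℝ[X], p.natDegree ≤ k ∧
      ∑ j ∈ range (k + 1), |p.coeff j| ≤ B ∧
      ∀ y ∈ Set.Icc (-1 : ℝ) 1, |p.eval y - max (y - t) 0| ≤ η)
    {ν g φ : X → ℝ} (hν0 : ∀ x, 0 ≤ ν x) (hν1 : 𝔼 x, ν x ≤ 1) (hg0 : ∀ x, 0 ≤ g x)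
    (hgν : ∀ x, g x ≤ ν x) (hφ : ∀ x, φ x ∈ Set.Icc (-1) 1)
    (hpow : ∀ j ∈ Icc 1 k, |𝔼 x, (ν x - 1) * φ x ^ j| ≤ ε') :
    ∃ h ∈ boundedWithMean X (𝔼 x, g x), 𝔼 x, (g x - h x) * φ x ≤ 4 * η + B * ε' := by
  obtain ⟨t, ht, h, hh, hmean, hthr⟩ :=
    exists_relaxed_threshold hφ (expect_mem_Icc_of_le hg0 hgν hν1) hη
  obtain ⟨p, hpk, hpB, hp⟩ := happrox t ht
  refine ⟨h, ⟨hh, hmean⟩, ?_⟩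
  calc 𝔼 x, (g x - h x) * φ x
      ≤ 𝔼 x, (ν x - 1) * max (φ x - t) 0 + η :=
        expect_sub_mul_le_of_threshold hg0 hgν hmean hthr
    _ ≤ 3 * η + (∑ j ∈ range (k + 1), |p.coeff j|) * ε' + η :=
        add_le_add (expect_mul_relu_le hν0 hν1 hφ hpk hp hε' hpow) le_rfl
    _ ≤ 4 * η + B * ε' := by nlinarith

end DenseModel

lemma sum_mul_mem_Icc_of_sum_abs_eq_one {ι : Type*} [Fintype ι] {b y : ι → ℝ}
    (hb : ∑ i, |b i| = 1) (hy : ∀ i, y i ∈ Set.Icc (-1) 1) : ∑ i, b i * y i ∈ Set.Icc (-1) 1 := by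
  refine abs_le.mp ((abs_sum_le_sum_abs _ _).trans (hb ▸ sum_le_sum fun i _ => ?_))
  rw [abs_mul]
  exact mul_le_of_le_one_right (abs_nonneg _) (abs_le.mpr (hy i))

/-- Green–Tao–Ziegler dense model theorem, decomposition form: `g = g₁ + g₂`
where `g₁` is a bounded measure with the same expectation as `g`, and `g₂`
is nearly orthogonal to `F`. -/
theorem dense_model_decomposition :
    ∀ ε : ℝ, 0 < ε →
      ∃ (k : ℕ) (ε' : ℝ), 0 < ε' ∧
        ∀ (X : Type) [Fintype X] [Nonempty X] (F : Finset (X → ℝ)),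
          (∀ f ∈ F, ∀ x, f x ∈ Set.Icc (-1 : ℝ) 1) →
          ∀ ν : X → ℝ, IsMeasure X ν →
            (∀ f ∈ FPow (↑F : Set (X → ℝ)) k, |ip X (fun x => ν x - 1) f| ≤ ε') →
            ∀ g : X → ℝ, IsMeasure X g → (∀ x, g x ≤ ν x) →
              ∃ g₁ g₂ : X → ℝ,
                (∀ x, g x = g₁ x + g₂ x) ∧
                IsMeasure X g₁ ∧ (∀ x, 0 ≤ g₁ x ∧ g₁ x ≤ 1) ∧
                ex X g₁ = ex X g ∧
                ∀ f ∈ F, |ip X g₂ f| ≤ ε := by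
  intro ε hε
  obtain ⟨k, B, hB, happrox⟩ :=
    exists_uniform_polynomial_approx_relu (by positivity : 0 < ε / 8) (-1 - ε / 8) 1 (-1) 1
  refine ⟨k, ε / (2 * (B + 1)), by positivity, ?_⟩
  intro X _ _ F hF ν hν hps g hg hgν
  simp only [IsMeasure, ex_eq_expect, ip_eq_expect] at hν hps hg ⊢
  have hBε' : B * (ε / (2 * (B + 1))) ≤ ε / 2 := by
    rw [mul_div_assoc', div_le_div_iff₀ (by positivity) two_pos]
    nlinarith
  have hδ := expect_mem_Icc_of_le hg.1 hgν hν.2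
  obtain ⟨h, ⟨hh, hmean⟩, hclose⟩ := exists_mem_forall_abs_expect_sub_mul_le
    (isCompact_boundedWithMean _) (convex_boundedWithMean _) ⟨_, const_mem_boundedWithMean hδ⟩
    (fun f : F => (f : X → ℝ)) g hε.le fun b hb => by
      obtain ⟨h, hK, hle⟩ := exists_mem_boundedWithMean_expect_sub_mul_le (by positivity)
        (by positivity) happrox hν.1 hν.2 hg.1 hgν
        (fun x => sum_mul_mem_Icc_of_sum_abs_eq_one hb fun f => hF f f.2 x)
        fun j hj => abs_expect_mul_pow_le hps (fun f => mem_coe.mpr f.2) hb hj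
      exact ⟨h, hK, by linarith⟩
  refine ⟨h, g - h, fun x => by simp, ⟨hh.1, hmean ▸ hδ.2⟩, fun x => ⟨hh.1 x, hh.2 x⟩, hmean,
    fun f hf => by simpa using hclose ⟨f, hf⟩⟩
end

section
/- There is an absolute constant c > 0 such that the following holds. Let X be a nonempty finite set, F a finite collection of functions X → [−1,1], ε > 0, δ ∈ (0,1], and let g₁ : X → [0,1] be a bounded measure with E_{x∈X} g₁(x) = δ. If (|F| + 1) · exp(−c · δ · ε² · |X|) < 1, then there exists a set M ⊆ X with |M| ≥ (1−ε)·δ·|X| such that |⟨1_M − g₁, f⟩| ≤ ε for every f ∈ F, where 1_M denotes the characteristic function of M. -/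
open Finset

lemma exp_le_quad {u : ℝ} (h : |u| ≤ 1) : Real.exp u ≤ 1 + u + u ^ 2 := by
  have h2 := Real.exp_bound h (n := 2) (by norm_num)
  have h3 : (∑ m ∈ range 2, u ^ m / m.factorial) = 1 + u := by
    simp [Finset.sum_range_succ]
  rw [h3] at h2
  have h4 : |u| ^ 2 = u ^ 2 := sq_abs u
  have h5 := (abs_sub_le_iff.1 h2).1
  rw [h4] at h5
  norm_num at h5
  nlinarith [sq_nonneg u]

lemma factor_le {p u : ℝ} (hp0 : 0 ≤ p) (hu : |u| ≤ 1) :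
    p * Real.exp u + (1 - p) ≤ Real.exp (p * (u + u ^ 2)) := by
  have h1 := exp_le_quad hu
  have h2 : p * (u + u ^ 2) + 1 ≤ Real.exp (p * (u + u ^ 2)) :=
    Real.add_one_le_exp _
  nlinarith

section W
variable {X : Type} [Fintype X] [DecidableEq X]

noncomputable def wt (p : X → ℝ) (M : Finset X) : ℝ :=
  (∏ x ∈ M, p x) * ∏ x ∈ Mᶜ, (1 - p x)

lemma wt_nonneg {p : X → ℝ} (hp : ∀ x, 0 ≤ p x ∧ p x ≤ 1) (M : Finset X) :
    0 ≤ wt p M :=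
  mul_nonneg (Finset.prod_nonneg fun x _ => (hp x).1)
    (Finset.prod_nonneg fun x _ => by linarith [(hp x).2])

lemma sum_wt_mul_prod (p G : X → ℝ) :
    ∑ M : Finset X, wt p M * ∏ x ∈ M, G x = ∏ x, (p x * G x + (1 - p x)) := by
  rw [Finset.prod_add]
  rw [← Finset.powerset_univ]
  apply Finset.sum_congr rfl
  intro M _
  rw [Finset.prod_mul_distrib, wt, Finset.compl_eq_univ_sdiff]
  ring

lemma sum_wt (p : X → ℝ) : ∑ M : Finset X, wt p M = 1 := by
  have h := sum_wt_mul_prod p (fun _ => 1)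
  simpa using h

end W

section C
variable {X : Type} [Fintype X] [DecidableEq X]

lemma chernoff (p a : X → ℝ) (hp : ∀ x, 0 ≤ p x ∧ p x ≤ 1) (ha : ∀ x, |a x| ≤ 1)
    (t s : ℝ) (ht0 : 0 ≤ t) (ht1 : t ≤ 1) :
    ∑ M ∈ univ.filter (fun M : Finset X => s + ∑ x, p x * a x ≤ ∑ x ∈ M, a x), wt p M
      ≤ Real.exp (-(t * s) + t ^ 2 * ∑ x, p x) := by
  set μ := ∑ x, p x * a x with hμ
  have hexp : ∀ M : Finset X,
      wt p M * Real.exp (t * (∑ x ∈ M, a x) - t * (s + μ))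
        = Real.exp (-(t * (s + μ))) * (wt p M * ∏ x ∈ M, Real.exp (t * a x)) := by
    intro M
    rw [sub_eq_add_neg, add_comm, Real.exp_add, Finset.mul_sum, Real.exp_sum]
    ring
  have stepA : ∑ M ∈ univ.filter (fun M : Finset X => s + μ ≤ ∑ x ∈ M, a x), wt p M
      ≤ ∑ M : Finset X, wt p M * Real.exp (t * (∑ x ∈ M, a x) - t * (s + μ)) := by
    refine le_trans (Finset.sum_le_sum ?_)
      (Finset.sum_le_sum_of_subset_of_nonneg (Finset.filter_subset _ _) ?_)
    · intro M hM
      rw [Finset.mem_filter] at hM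
      refine le_mul_of_one_le_right (wt_nonneg hp M) (Real.one_le_exp ?_)
      have : (0:ℝ) ≤ t * ((∑ x ∈ M, a x) - (s + μ)) :=
        mul_nonneg ht0 (by linarith [hM.2])
      nlinarith
    · intro M _ _
      exact mul_nonneg (wt_nonneg hp M) (Real.exp_pos _).le
  have stepC : ∑ M : Finset X, wt p M * Real.exp (t * (∑ x ∈ M, a x) - t * (s + μ))
      = Real.exp (-(t * (s + μ))) * ∏ x, (p x * Real.exp (t * a x) + (1 - p x)) := by
    rw [← sum_wt_mul_prod p (fun x => Real.exp (t * a x)), Finset.mul_sum]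
    exact Finset.sum_congr rfl fun M _ => hexp M
  have hu : ∀ x, |t * a x| ≤ 1 := by
    intro x
    rw [abs_mul, abs_of_nonneg ht0]
    calc t * |a x| ≤ 1 * 1 := mul_le_mul ht1 (ha x) (abs_nonneg _) zero_le_one
    _ = 1 := one_mul 1
  have stepD : ∏ x, (p x * Real.exp (t * a x) + (1 - p x))
      ≤ Real.exp (∑ x, p x * (t * a x + (t * a x) ^ 2)) := by
    rw [Real.exp_sum]
    refine Finset.prod_le_prod (fun x _ => ?_) (fun x _ => factor_le (hp x).1 (hu x))
    have := (Real.exp_pos (t * a x)).le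
    nlinarith [(hp x).1, (hp x).2]
  have stepE : ∑ x, p x * (t * a x + (t * a x) ^ 2) ≤ t * μ + t ^ 2 * ∑ x, p x := by
    rw [hμ, Finset.mul_sum, Finset.mul_sum, ← Finset.sum_add_distrib]
    refine Finset.sum_le_sum fun x _ => ?_
    have h1 : a x ^ 2 ≤ 1 := by nlinarith [ha x, abs_nonneg (a x), le_abs_self (a x), neg_abs_le (a x), sq_abs (a x)]
    nlinarith [mul_le_mul_of_nonneg_left h1 (mul_nonneg (hp x).1 (sq_nonneg t)), (hp x).1, sq_nonneg t]
  calc ∑ M ∈ univ.filter (fun M : Finset X => s + μ ≤ ∑ x ∈ M, a x), wt p M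
      ≤ Real.exp (-(t * (s + μ))) * ∏ x, (p x * Real.exp (t * a x) + (1 - p x)) := by
        rw [← stepC]; exact stepA
    _ ≤ Real.exp (-(t * (s + μ))) * Real.exp (t * μ + t ^ 2 * ∑ x, p x) := by
        refine mul_le_mul_of_nonneg_left (le_trans stepD ?_) (Real.exp_pos _).le
        exact Real.exp_le_exp.2 stepE
    _ = Real.exp (-(t * s) + t ^ 2 * ∑ x, p x) := by
        rw [← Real.exp_add]; ring_nf

end C

/-- Replacing a bounded-measure dense model by an actual dense set, via the
probabilistic method and Chernoff bounds. -/
theorem dense_model_to_dense_set :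
    ∃ c : ℝ, 0 < c ∧
      ∀ (X : Type) [Fintype X] [DecidableEq X] [Nonempty X] (F : Finset (X → ℝ)),
        (∀ f ∈ F, ∀ x, f x ∈ Set.Icc (-1 : ℝ) 1) →
        ∀ ε δ : ℝ, 0 < ε → 0 < δ → δ ≤ 1 →
        ∀ g₁ : X → ℝ, IsMeasure X g₁ → (∀ x, 0 ≤ g₁ x ∧ g₁ x ≤ 1) →
          ex X g₁ = δ →
          ((F.card : ℝ) + 1) * Real.exp (-(c * δ * ε ^ 2 * (Fintype.card X : ℝ))) < 1 →
          ∃ M : Finset X,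
            (1 - ε) * δ * (Fintype.card X : ℝ) ≤ (M.card : ℝ) ∧
            ∀ f ∈ F,
              |ip X (fun x => (if x ∈ M then (1 : ℝ) else 0) - g₁ x) f| ≤ ε := by
  refine ⟨1/8, by norm_num, ?_⟩
  intro X _ _ _ F hF ε δ hε hδ hδ1 g₁ _ hg hexg hhyp
  have hN0 : (0:ℝ) < (Fintype.card X : ℝ) := by exact_mod_cast Fintype.card_pos
  set N : ℝ := (Fintype.card X : ℝ) with hNdef
  have hsumg : ∑ x, g₁ x = δ * N := by
    rw [ex, div_eq_iff (ne_of_gt hN0)] at hexg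
    exact hexg
  have hFb : ∀ f ∈ F, ∀ x, |f x| ≤ 1 := fun f hf x =>
    abs_le.2 ⟨(hF f hf x).1, (hF f hf x).2⟩
  have hg0 : (0:ℝ) ≤ ∑ x, g₁ x := Finset.sum_nonneg fun x _ => (hg x).1
  by_cases hε1 : 1 ≤ ε
  · -- trivial case ε ≥ 1 : take M = ∅
    refine ⟨∅, ?_, ?_⟩
    · simp only [Finset.card_empty, Nat.cast_zero]
      nlinarith
    · intro f hf
      rw [ip]
      have habs : |∑ x, ((if x ∈ (∅:Finset X) then (1:ℝ) else 0) - g₁ x) * f x| ≤ δ * N := by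
        calc |∑ x, ((if x ∈ (∅:Finset X) then (1:ℝ) else 0) - g₁ x) * f x|
            ≤ ∑ x, |((if x ∈ (∅:Finset X) then (1:ℝ) else 0) - g₁ x) * f x| :=
              Finset.abs_sum_le_sum_abs _ _
          _ ≤ ∑ x, g₁ x := by
              refine Finset.sum_le_sum fun x _ => ?_
              rw [if_neg (Finset.notMem_empty x), zero_sub, abs_mul, abs_neg,
                abs_of_nonneg (hg x).1]
              calc g₁ x * |f x| ≤ g₁ x * 1 :=
                    mul_le_mul_of_nonneg_left (hFb f hf x) (hg x).1
                _ = g₁ x := mul_one _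
          _ = δ * N := hsumg
      rw [abs_div, abs_of_pos hN0, div_le_iff₀ hN0]
      nlinarith
  · push_neg at hε1
    have hε1' : ε ≤ 1 := le_of_lt hε1
    by_contra hcon
    push_neg at hcon
    -- hcon : ∀ M, (1-ε)*δ*N ≤ card M → ∃ f ∈ F, ε < |ip ...|
    have hbad : ∀ M : Finset X,
        ¬((1-ε)*δ*N ≤ (M.card:ℝ) ∧
          ∀ f ∈ F, |(∑ x ∈ M, f x) - ∑ x, g₁ x * f x| ≤ ε * N) := by
      rintro M ⟨h1, h2⟩
      obtain ⟨f, hf, hlt⟩ := hcon M h1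
      have hD : ∑ x, ((if x ∈ M then (1:ℝ) else 0) - g₁ x) * f x
          = (∑ x ∈ M, f x) - ∑ x, g₁ x * f x := by
        have hpt : ∀ x : X, ((if x ∈ M then (1:ℝ) else 0) - g₁ x) * f x
            = (if x ∈ M then f x else 0) - g₁ x * f x := by
          intro x; split <;> ring
        rw [Finset.sum_congr rfl fun x _ => hpt x, Finset.sum_sub_distrib,
          Finset.sum_ite_mem, Finset.univ_inter]
      have hle : |ip X (fun x => (if x ∈ M then (1:ℝ) else 0) - g₁ x) f| ≤ ε := by
        rw [ip]
        rw [hD, abs_div, abs_of_pos hN0, div_le_iff₀ hN0]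
        exact h2 f hf
      exact absurd hle (not_le.2 hlt)
    set t : ℝ := ε/2 with htdef
    have ht0 : 0 ≤ t := by positivity
    have ht1 : t ≤ 1 := by rw [htdef]; linarith
    set q : ℝ := Real.exp (-(δ * ε^2 * N)/4) with hqdef
    have hq0 : 0 < q := Real.exp_pos _
    -- Chernoff bounds for each bad event
    have A0 : ∑ M ∈ Finset.univ.filter
        (fun M : Finset X => ε*δ*N + ∑ x, g₁ x * (-1:ℝ) ≤ ∑ x ∈ M, (-1:ℝ)), wt g₁ M ≤ q := by
      refine le_trans (chernoff g₁ (fun _ => (-1:ℝ)) hg (fun x => by norm_num) t (ε*δ*N) ht0 ht1) ?_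
      rw [hsumg, hqdef, htdef]
      exact Real.exp_le_exp.2 (by nlinarith)
    have Ap : ∀ f ∈ F, ∑ M ∈ Finset.univ.filter
        (fun M : Finset X => ε*N + ∑ x, g₁ x * f x ≤ ∑ x ∈ M, f x), wt g₁ M ≤ q := by
      intro f hf
      refine le_trans (chernoff g₁ f hg (hFb f hf) t (ε*N) ht0 ht1) ?_
      rw [hsumg, hqdef, htdef]
      refine Real.exp_le_exp.2 ?_
      nlinarith [mul_nonneg (mul_nonneg (sub_nonneg.2 hδ1) (sq_nonneg ε)) hN0.le]
    have Am : ∀ f ∈ F, ∑ M ∈ Finset.univ.filter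
        (fun M : Finset X => ε*N + ∑ x, g₁ x * (-f x) ≤ ∑ x ∈ M, (-f x)), wt g₁ M ≤ q := by
      intro f hf
      refine le_trans (chernoff g₁ (fun x => -f x) hg
        (fun x => by rw [abs_neg]; exact hFb f hf x) t (ε*N) ht0 ht1) ?_
      rw [hsumg, hqdef, htdef]
      refine Real.exp_le_exp.2 ?_
      nlinarith [mul_nonneg (mul_nonneg (sub_nonneg.2 hδ1) (sq_nonneg ε)) hN0.le]
    -- pointwise union bound
    have hnn : ∀ (c : Prop) [Decidable c] (M : Finset X),
        (0:ℝ) ≤ (if c then wt g₁ M else 0) := by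
      intro c _ M; split
      · exact wt_nonneg hg M
      · exact le_refl 0
    have key : ∀ M : Finset X, wt g₁ M ≤
        (if ε*δ*N + ∑ x, g₁ x * (-1:ℝ) ≤ ∑ x ∈ M, (-1:ℝ) then wt g₁ M else 0)
        + ∑ f ∈ F, ((if ε*N + ∑ x, g₁ x * f x ≤ ∑ x ∈ M, f x then wt g₁ M else 0)
            + (if ε*N + ∑ x, g₁ x * (-f x) ≤ ∑ x ∈ M, (-f x) then wt g₁ M else 0)) := by
      intro M
      have hw := wt_nonneg hg M
      have hsumnn : (0:ℝ) ≤ ∑ f ∈ F,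
          ((if ε*N + ∑ x, g₁ x * f x ≤ ∑ x ∈ M, f x then wt g₁ M else 0)
            + (if ε*N + ∑ x, g₁ x * (-f x) ≤ ∑ x ∈ M, (-f x) then wt g₁ M else 0)) :=
        Finset.sum_nonneg fun f _ => add_nonneg (hnn _ M) (hnn _ M)
      rcases not_and_or.1 (hbad M) with h | h
      · push_neg at h
        have hc : ε*δ*N + ∑ x, g₁ x * (-1:ℝ) ≤ ∑ x ∈ M, (-1:ℝ) := by
          have e1 : ∑ x, g₁ x * (-1:ℝ) = -(δ*N) := by
            rw [← hsumg]; simp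
          have e2 : ∑ x ∈ M, (-1:ℝ) = -(M.card:ℝ) := by simp
          rw [e1, e2]; linarith
        rw [if_pos hc]
        linarith
      · push_neg at h
        obtain ⟨f, hfF, hfb⟩ := h
        have e3 : ∑ x, g₁ x * (-f x) = -∑ x, g₁ x * f x := by
          rw [← Finset.sum_neg_distrib]; exact Finset.sum_congr rfl fun x _ => by ring
        have e4 : ∑ x ∈ M, (-f x) = -∑ x ∈ M, f x := by
          rw [← Finset.sum_neg_distrib]
        have hterm : wt g₁ M ≤
            (if ε*N + ∑ x, g₁ x * f x ≤ ∑ x ∈ M, f x then wt g₁ M else 0)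
            + (if ε*N + ∑ x, g₁ x * (-f x) ≤ ∑ x ∈ M, (-f x) then wt g₁ M else 0) := by
          rcases lt_abs.1 hfb with hcase | hcase
          · rw [if_pos (by linarith)]
            linarith [hnn (ε*N + ∑ x, g₁ x * (-f x) ≤ ∑ x ∈ M, (-f x)) M]
          · have : ε*N + ∑ x, g₁ x * (-f x) ≤ ∑ x ∈ M, (-f x) := by
              rw [e3, e4]; linarith
            rw [if_pos this]
            linarith [hnn (ε*N + ∑ x, g₁ x * f x ≤ ∑ x ∈ M, f x) M]
        have hsingle : (if ε*N + ∑ x, g₁ x * f x ≤ ∑ x ∈ M, f x then wt g₁ M else 0)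
            + (if ε*N + ∑ x, g₁ x * (-f x) ≤ ∑ x ∈ M, (-f x) then wt g₁ M else 0)
            ≤ ∑ f ∈ F, ((if ε*N + ∑ x, g₁ x * f x ≤ ∑ x ∈ M, f x then wt g₁ M else 0)
            + (if ε*N + ∑ x, g₁ x * (-f x) ≤ ∑ x ∈ M, (-f x) then wt g₁ M else 0)) :=
          Finset.single_le_sum
          (f := fun f => (if ε*N + ∑ x, g₁ x * f x ≤ ∑ x ∈ M, f x then wt g₁ M else 0)
            + (if ε*N + ∑ x, g₁ x * (-f x) ≤ ∑ x ∈ M, (-f x) then wt g₁ M else 0))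
          (fun f _ => add_nonneg (hnn _ M) (hnn _ M)) hfF
        have h0 := hnn (ε*δ*N + ∑ x, g₁ x * (-1:ℝ) ≤ ∑ x ∈ M, (-1:ℝ)) M
        linarith
    -- sum the union bound
    have total : (1:ℝ) ≤
        (∑ M ∈ Finset.univ.filter
          (fun M : Finset X => ε*δ*N + ∑ x, g₁ x * (-1:ℝ) ≤ ∑ x ∈ M, (-1:ℝ)), wt g₁ M)
        + ∑ f ∈ F, ((∑ M ∈ Finset.univ.filter
            (fun M : Finset X => ε*N + ∑ x, g₁ x * f x ≤ ∑ x ∈ M, f x), wt g₁ M)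
          + ∑ M ∈ Finset.univ.filter
            (fun M : Finset X => ε*N + ∑ x, g₁ x * (-f x) ≤ ∑ x ∈ M, (-f x)), wt g₁ M) := by
      calc (1:ℝ) = ∑ M : Finset X, wt g₁ M := (sum_wt g₁).symm
        _ ≤ ∑ M : Finset X,
            ((if ε*δ*N + ∑ x, g₁ x * (-1:ℝ) ≤ ∑ x ∈ M, (-1:ℝ) then wt g₁ M else 0)
            + ∑ f ∈ F, ((if ε*N + ∑ x, g₁ x * f x ≤ ∑ x ∈ M, f x then wt g₁ M else 0)
                + (if ε*N + ∑ x, g₁ x * (-f x) ≤ ∑ x ∈ M, (-f x) then wt g₁ M else 0))) :=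
            Finset.sum_le_sum fun M _ => key M
        _ = _ := by
            rw [Finset.sum_add_distrib]
            congr 1
            · exact (Finset.sum_filter _ _).symm
            · rw [Finset.sum_comm]
              refine Finset.sum_congr rfl fun f _ => ?_
              rw [Finset.sum_add_distrib]
              congr 1
              · exact (Finset.sum_filter _ _).symm
              · exact (Finset.sum_filter _ _).symm
    have total2 : (1:ℝ) ≤ q + (F.card : ℝ) * (q + q) := by
      have hsF : ∑ f ∈ F, ((∑ M ∈ Finset.univ.filter
            (fun M : Finset X => ε*N + ∑ x, g₁ x * f x ≤ ∑ x ∈ M, f x), wt g₁ M)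
          + ∑ M ∈ Finset.univ.filter
            (fun M : Finset X => ε*N + ∑ x, g₁ x * (-f x) ≤ ∑ x ∈ M, (-f x)), wt g₁ M)
          ≤ ∑ _f ∈ F, (q + q) :=
        Finset.sum_le_sum fun f hf => add_le_add (Ap f hf) (Am f hf)
      rw [Finset.sum_const, nsmul_eq_mul] at hsF
      linarith
    -- contradiction with the hypothesis
    clear total key A0 Ap Am hnn hbad hcon hF hFb
    have hr0 : (0:ℝ) < Real.exp (-(1/8 * δ * ε^2 * N)) := Real.exp_pos _
    have hqr : q = Real.exp (-(1/8 * δ * ε^2 * N)) ^ 2 := by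
      rw [hqdef, show Real.exp (-(1/8 * δ * ε^2 * N)) ^ 2
          = Real.exp (-(1/8 * δ * ε^2 * N)) * Real.exp (-(1/8 * δ * ε^2 * N)) from sq _,
        ← Real.exp_add]
      congr 1
      ring
    have hK0 : (0:ℝ) ≤ (F.card : ℝ) := Nat.cast_nonneg _
    set K : ℝ := (F.card : ℝ) with hKdef
    set r : ℝ := Real.exp (-(1/8 * δ * ε^2 * N)) with hrdef
    have hx : (0:ℝ) ≤ (K + 1) * r := by positivity
    have h1 : ((K + 1) * r) ^ 2 < 1 := pow_lt_one₀ hx hhyp two_ne_zero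
    have h2 : (2*K+1) * r^2 < 1 := by nlinarith [h1, sq_nonneg (K*r)]
    have h4 : q + K*(q+q) = (2*K+1) * r^2 := by rw [hqr]; ring
    linarith [total2, h4, h2]
end

section
/- Let X be a nonempty finite set, F a finite collection of functions X → [−1,1], and set F' := F ∪ {−f : f ∈ F}. Let ε > 0, let g : X → ℝ be a measure with E_{x∈X} g(x) = δ, and let G be the set of all bounded measures g₁ : X → [0,1] with E_{x∈X} g₁(x) = δ. If for every g₁ ∈ G there exists f ∈ F' with ⟨g − g₁, f⟩ > ε, then there exists a function f̄ : X → [−1,1] that is a convex combination of functions from F' such that ⟨g − g₁, f̄⟩ > ε for every g₁ ∈ G. -/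
/-- `fbar` is a convex combination of functions from the collection `H`. -/
def IsConvexComb {X : Type} (H : Set (X → ℝ)) (fbar : X → ℝ) : Prop :=
  ∃ (T : Finset (X → ℝ)) (lam : (X → ℝ) → ℝ),
    (↑T : Set (X → ℝ)) ⊆ H ∧ (∀ h ∈ T, 0 ≤ lam h) ∧ (∑ h ∈ T, lam h) = 1 ∧
    fbar = fun x => ∑ h ∈ T, lam h * h x

private lemma linfun_eq {ι : Type} [Fintype ι] [DecidableEq ι]
    (z : (ι → ℝ) →L[ℝ] ℝ) (w : ι → ℝ) :
    z w = ∑ i, w i * z (Pi.single i 1) := by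
  have hw : w = ∑ i, w i • (Pi.single i 1 : ι → ℝ) := by
    have h := Finset.univ_sum_single w
    conv_lhs => rw [← h]
    apply Finset.sum_congr rfl
    intro i _
    ext j
    by_cases h : j = i <;> simp [Pi.single_apply, h]
  conv_lhs => rw [hw]
  rw [map_sum]
  simp [map_smul]

private lemma ip_second_sum {X : Type} [Fintype X] (u : X → ℝ)
    (T : Finset (X → ℝ)) (lam : (X → ℝ) → ℝ) :
    ip X u (fun x => ∑ h ∈ T, lam h * h x) = ∑ h ∈ T, lam h * ip X u h := by
  unfold ip
  have key : (∑ x, u x * ∑ h ∈ T, lam h * h x) = ∑ h ∈ T, lam h * ∑ x, u x * h x := by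
    simp only [Finset.mul_sum]
    rw [Finset.sum_comm]
    apply Finset.sum_congr rfl; intro h _
    apply Finset.sum_congr rfl; intro x _
    ring
  rw [key, Finset.sum_div]
  apply Finset.sum_congr rfl; intro h _
  rw [mul_div_assoc]

private lemma ip_comb {X : Type} [Fintype X] (g g₁ g₂ f : X → ℝ)
    {a b : ℝ} (hab : a + b = 1) :
    ip X (fun x => g x - (a * g₁ x + b * g₂ x)) f
      = a * ip X (fun x => g x - g₁ x) f + b * ip X (fun x => g x - g₂ x) f := by
  have key : (∑ x, (g x - (a * g₁ x + b * g₂ x)) * f x)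
      = a * (∑ x, (g x - g₁ x) * f x) + b * (∑ x, (g x - g₂ x) * f x) := by
    rw [Finset.mul_sum, Finset.mul_sum, ← Finset.sum_add_distrib]
    apply Finset.sum_congr rfl
    intro x _
    linear_combination (-(g x * f x)) * hab
  simp only [ip]
  rw [key, add_div, mul_div_assoc, mul_div_assoc]

/-- Reversing the order of quantifiers via the min-max theorem: if every
dense bounded measure `g₁` is distinguished from `g` by some `f ∈ F'`, then
a single convex combination `f̄` of functions from `F'` distinguishes `g`
from every such `g₁`. -/
theorem minmax_quantifier_reversal
    (X : Type) [Fintype X] [Nonempty X] (F : Finset (X → ℝ))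
    (hF : ∀ f ∈ F, ∀ x, f x ∈ Set.Icc (-1 : ℝ) 1)
    (ε δ : ℝ) (hε : 0 < ε)
    (g : X → ℝ) (hg : IsMeasure X g) (hgδ : ex X g = δ)
    (H : ∀ g₁ : X → ℝ, IsMeasure X g₁ → (∀ x, 0 ≤ g₁ x ∧ g₁ x ≤ 1) →
      ex X g₁ = δ →
      ∃ f ∈ (↑F : Set (X → ℝ)) ∪ (fun f => -f) '' (↑F : Set (X → ℝ)),
        ε < ip X (fun x => g x - g₁ x) f) :
    ∃ fbar : X → ℝ, (∀ x, fbar x ∈ Set.Icc (-1 : ℝ) 1) ∧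
      IsConvexComb ((↑F : Set (X → ℝ)) ∪ (fun f => -f) '' (↑F : Set (X → ℝ))) fbar ∧
      ∀ g₁ : X → ℝ, IsMeasure X g₁ → (∀ x, 0 ≤ g₁ x ∧ g₁ x ≤ 1) →
        ex X g₁ = δ →
        ε < ip X (fun x => g x - g₁ x) fbar := by
  classical
  have hcard : (0 : ℝ) < (Fintype.card X : ℝ) := by
    exact_mod_cast Fintype.card_pos
  have hcard' : ((Fintype.card X : ℝ)) ≠ 0 := ne_of_gt hcard
  -- δ ∈ [0,1]
  have hδ0 : 0 ≤ δ := by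
    rw [← hgδ]
    exact div_nonneg (Finset.sum_nonneg fun x _ => hg.1 x) hcard.le
  have hδ1 : δ ≤ 1 := hgδ ▸ hg.2
  -- F' and its set version
  set F' : Finset (X → ℝ) := F ∪ F.image (fun f => -f) with hF'def
  have hF'set : (↑F' : Set (X → ℝ))
      = (↑F : Set (X → ℝ)) ∪ (fun f => -f) '' (↑F : Set (X → ℝ)) := by
    simp [hF'def, Finset.coe_union, Finset.coe_image]
  have hF'bd : ∀ h ∈ F', ∀ x, -1 ≤ h x ∧ h x ≤ 1 := by
    intro h hh x
    rcases Finset.mem_union.1 hh with hh | hh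
    · exact ⟨(hF h hh x).1, (hF h hh x).2⟩
    · rcases Finset.mem_image.1 hh with ⟨f, hf, rfl⟩
      have h2 := hF f hf x
      simp only [Pi.neg_apply]
      constructor
      · linarith [h2.2]
      · linarith [h2.1]
  -- the set G of dense bounded measures
  set G : Set (X → ℝ) := {g₁ | (∀ x, g₁ x ∈ Set.Icc (0:ℝ) 1) ∧ ex X g₁ = δ} with hGdef
  have hGmeas : ∀ g₁ ∈ G, IsMeasure X g₁ :=
    fun g₁ h => ⟨fun x => (h.1 x).1, h.2 ▸ hδ1⟩
  have hexconst : ∀ c : ℝ, ex X (fun _ => c) = c := by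
    intro c
    simp [ex, Finset.sum_const, nsmul_eq_mul, mul_div_assoc, div_self hcard']
  have hGne : (fun _ : X => δ) ∈ G := ⟨fun x => ⟨hδ0, hδ1⟩, hexconst δ⟩
  -- the map Φ
  set Φ : (X → ℝ) → ({f // f ∈ F'} → ℝ) :=
    fun g₁ f => ip X (fun x => g x - g₁ x) f.1 with hΦdef
  have hΦcont : Continuous Φ := by
    apply continuous_pi
    intro f
    simp only [hΦdef, ip]
    exact (continuous_finset_sum _ fun x _ =>
      ((continuous_const.sub (continuous_apply x)).mul continuous_const)).div_const _
  -- G compact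
  have hexcont : Continuous fun g₁ : X → ℝ => ex X g₁ := by
    simp only [ex]
    exact (continuous_finset_sum _ fun x _ => continuous_apply x).div_const _
  have hGclosed : IsClosed G := by
    have h1 : IsClosed {g₁ : X → ℝ | ∀ x, g₁ x ∈ Set.Icc (0:ℝ) 1} := by
      have he : {g₁ : X → ℝ | ∀ x, g₁ x ∈ Set.Icc (0:ℝ) 1}
          = Set.univ.pi (fun _ : X => Set.Icc (0:ℝ) 1) := by
        ext w; simp [Set.mem_pi, Set.mem_Icc, Pi.le_def, forall_and]
      rw [he]
      exact isClosed_set_pi fun x _ => isClosed_Icc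
    have h2 : IsClosed {g₁ : X → ℝ | ex X g₁ = δ} :=
      isClosed_eq hexcont continuous_const
    exact h1.inter h2
  have hGcomp : IsCompact G := by
    have h1 : IsCompact (Set.univ.pi fun _ : X => Set.Icc (0:ℝ) 1) :=
      isCompact_univ_pi fun _ => isCompact_Icc
    exact h1.of_isClosed_subset hGclosed (fun g₁ h x _ => h.1 x)
  -- G convex
  have hGconv : Convex ℝ G := by
    intro g₁ h₁ g₂ h₂ a b ha hb hab
    constructor
    · intro x
      exact (convex_Icc (0:ℝ) 1) (h₁.1 x) (h₂.1 x) ha hb hab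
    · show ex X (a • g₁ + b • g₂) = δ
      have : ex X (a • g₁ + b • g₂) = a * ex X g₁ + b * ex X g₂ := by
        simp only [ex, Pi.add_apply, Pi.smul_apply, smul_eq_mul,
          Finset.sum_add_distrib, ← Finset.mul_sum, add_div, mul_div_assoc]
      rw [this, h₁.2, h₂.2]
      linear_combination δ * hab
  -- K := image of G
  set K : Set ({f // f ∈ F'} → ℝ) := Φ '' G with hKdef
  have hKcomp : IsCompact K := hGcomp.image hΦcont
  have hKconv : Convex ℝ K := by
    rintro v₁ ⟨g₁, h₁, rfl⟩ v₂ ⟨g₂, h₂, rfl⟩ a b ha hb hab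
    refine ⟨a • g₁ + b • g₂, hGconv h₁ h₂ ha hb hab, ?_⟩
    ext f
    show Φ (a • g₁ + b • g₂) f = a * Φ g₁ f + b * Φ g₂ f
    simp only [hΦdef, Pi.add_apply, Pi.smul_apply, smul_eq_mul]
    exact ip_comb g g₁ g₂ f.1 hab
  have hKne : K.Nonempty := ⟨Φ (fun _ => δ), ⟨_, hGne, rfl⟩⟩
  -- C := functions bounded by ε
  set C : Set ({f // f ∈ F'} → ℝ) := {v | ∀ f, v f ≤ ε} with hCdef
  have hCclosed : IsClosed C := by
    have he : C = Set.univ.pi (fun _ => Set.Iic ε) := by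
      ext w; simp [hCdef, Set.mem_pi, Set.mem_Iic, Pi.le_def, Subtype.forall]
    rw [he]
    exact isClosed_set_pi fun f _ => isClosed_Iic
  have hCconv : Convex ℝ C := by
    intro v₁ h₁ v₂ h₂ a b ha hb hab f
    have : a * v₁ f + b * v₂ f ≤ a * ε + b * ε := by
      apply add_le_add (mul_le_mul_of_nonneg_left (h₁ f) ha)
        (mul_le_mul_of_nonneg_left (h₂ f) hb)
    simpa using this.trans_eq (by linear_combination ε * hab)
  have hCne : (fun _ => ε) ∈ C := fun f => le_refl ε
  -- disjointness from H
  have hdisj : Disjoint K C := by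
    rw [Set.disjoint_left]
    rintro v ⟨g₁, hg₁, rfl⟩ hvC
    obtain ⟨f, hfmem, hfgt⟩ := H g₁ (hGmeas g₁ hg₁)
      (fun x => ⟨(hg₁.1 x).1, (hg₁.1 x).2⟩) hg₁.2
    rw [← hF'set] at hfmem
    exact absurd (hvC ⟨f, hfmem⟩) (not_le.2 hfgt)
  -- separation
  obtain ⟨z, u₀, v₀, hzK, huv, hzC⟩ :=
    geometric_hahn_banach_compact_closed hKconv hKcomp hCconv hCclosed hdisj
  -- coordinates of z
  set y : {f // f ∈ F'} → ℝ := fun f => -(z (Pi.single f 1)) with hydef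
  have hynn : ∀ f, 0 ≤ y f := by
    intro f₀
    by_contra hneg
    push_neg at hneg
    -- z (single f₀ 1) > 0; push down in C
    have hc0 : 0 < z (Pi.single f₀ 1) := by
      simp only [hydef, neg_neg] at hneg
      linarith [neg_lt_zero.1 hneg]
    set t : ℝ := (z (fun _ => ε) - v₀) / z (Pi.single f₀ 1) + 1 with htdef
    have ht0 : 0 < t := by
      have : 0 < z (fun _ => ε) - v₀ := sub_pos.2 (hzC _ hCne)
      positivity
    set w₁ : {f // f ∈ F'} → ℝ :=
      (fun _ => ε) - t • (Pi.single f₀ 1 : {f // f ∈ F'} → ℝ) with hw₁def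
    have hmem : w₁ ∈ C := by
      intro f
      simp only [hw₁def]
      simp only [Pi.sub_apply, Pi.smul_apply, smul_eq_mul]
      have hsg : (0:ℝ) ≤ (Pi.single f₀ 1 : {f // f ∈ F'} → ℝ) f := by
        rcases eq_or_ne f f₀ with rfl | hne
        · simp
        · simp [Pi.single_apply, hne]
      nlinarith
    have := hzC _ hmem
    rw [hw₁def, map_sub, map_smul] at this
    simp only [smul_eq_mul] at this
    have hteq : t * z (Pi.single f₀ 1) = (z (fun _ => ε) - v₀) + z (Pi.single f₀ 1) := by
      rw [htdef, add_mul, one_mul, div_mul_cancel₀ _ (ne_of_gt hc0)]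
    rw [hteq] at this
    linarith
  have hzeq : ∀ w, z w = -∑ f, w f * y f := by
    intro w
    rw [linfun_eq z w]
    simp only [hydef, mul_neg, Finset.sum_neg_distrib, neg_neg]
  set S : ℝ := ∑ f, y f with hSdef
  have hSnn : 0 ≤ S := Finset.sum_nonneg fun f _ => hynn f
  -- key inequalities
  have hKineq : ∀ g₁ ∈ G, ∑ f, Φ g₁ f * y f > -u₀ := by
    intro g₁ hg₁
    have := hzK _ ⟨g₁, hg₁, rfl⟩
    rw [hzeq] at this
    linarith
  have hCineq : ε * S < -v₀ := by
    have := hzC _ hCne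
    rw [hzeq] at this
    simp only [← Finset.mul_sum] at this
    linarith
  have hSpos : 0 < S := by
    rcases lt_or_eq_of_le hSnn with h | h
    · exact h
    · exfalso
      have hy0 : ∀ f, y f = 0 := by
        intro f
        have := (Finset.sum_eq_zero_iff_of_nonneg (fun f _ => hynn f)).1 h.symm
        exact this f (Finset.mem_univ f)
      have h1 := hKineq _ hGne
      have h2 := hCineq
      rw [← h, mul_zero] at h2
      simp [hy0] at h1
      linarith
  -- the convex combination weights
  set lam : (X → ℝ) → ℝ := fun h => if hh : h ∈ F' then y ⟨h, hh⟩ / S else 0 with hlamdef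
  have hlamval : ∀ f : {f // f ∈ F'}, lam f.1 = y f / S := by
    intro f
    simp only [hlamdef, dif_pos f.2]
  have hlamnn : ∀ h ∈ F', 0 ≤ lam h := by
    intro h hh
    rw [hlamval ⟨h, hh⟩]
    exact div_nonneg (hynn _) hSnn
  have hsum_sub : ∀ φ : (X → ℝ) → ℝ, (∑ h ∈ F', φ h) = ∑ f : {f // f ∈ F'}, φ f.1 := by
    intro φ
    exact (Finset.sum_coe_sort F' φ).symm
  have hlamsum : (∑ h ∈ F', lam h) = 1 := by
    rw [hsum_sub]
    have : (∑ f : {f // f ∈ F'}, lam f.1) = ∑ f : {f // f ∈ F'}, y f / S := by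
      apply Finset.sum_congr rfl; intro f _; exact hlamval f
    rw [this, ← Finset.sum_div, ← hSdef, div_self (ne_of_gt hSpos)]
  -- define fbar
  refine ⟨fun x => ∑ h ∈ F', lam h * h x, ?_, ?_, ?_⟩
  · -- bounds
    intro x
    constructor
    · have : (∑ h ∈ F', lam h * (-1 : ℝ)) ≤ ∑ h ∈ F', lam h * h x := by
        apply Finset.sum_le_sum
        intro h hh
        exact mul_le_mul_of_nonneg_left (hF'bd h hh x).1 (hlamnn h hh)
      calc (-1 : ℝ) = ∑ h ∈ F', lam h * (-1) := by
            rw [← Finset.sum_mul, hlamsum, one_mul]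
        _ ≤ _ := this
    · have : (∑ h ∈ F', lam h * h x) ≤ ∑ h ∈ F', lam h * (1 : ℝ) := by
        apply Finset.sum_le_sum
        intro h hh
        exact mul_le_mul_of_nonneg_left (hF'bd h hh x).2 (hlamnn h hh)
      calc (∑ h ∈ F', lam h * h x) ≤ ∑ h ∈ F', lam h * 1 := this
        _ = 1 := by rw [← Finset.sum_mul, hlamsum, one_mul]
  · -- convex combination
    exact ⟨F', lam, hF'set ▸ subset_rfl, hlamnn, hlamsum, rfl⟩
  · -- main inequality
    intro g₁ hm hb hex
    have hg₁G : g₁ ∈ G := ⟨fun x => ⟨(hb x).1, (hb x).2⟩, hex⟩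
    rw [ip_second_sum]
    rw [hsum_sub (fun h => lam h * ip X (fun x => g x - g₁ x) h)]
    have heq : (∑ f : {f // f ∈ F'}, lam f.1 * ip X (fun x => g x - g₁ x) f.1)
        = (∑ f, Φ g₁ f * y f) / S := by
      rw [Finset.sum_div]
      apply Finset.sum_congr rfl
      intro f _
      rw [hlamval f]
      simp only [hΦdef]
      ring
    rw [heq]
    rw [lt_div_iff₀ hSpos]
    have := hKineq g₁ hg₁G
    linarith [hCineq, huv]
end

section
/- Let X be a nonempty finite set, ε > 0, δ ∈ (0,1] with δ|X| an integer, and let f̄ : X → [−1,1]. Let S ⊆ X be a set of δ|X| elements of X maximizing f̄, i.e., |S| = δ|X| and f̄(x) ≥ f̄(y) for every x ∈ S and y ∈ X∖S, and let g₁ := 1_S be its characteristic function. Let g : X → ℝ be a measure with E_{x∈X} g(x) = δ, and suppose that for some t ∈ ℝ we have ⟨g, f̄_t⟩ ≥ ⟨g₁, f̄_{t−ε/3}⟩ + ε/3. Then g₁(x) = 1 for every x ∈ X with f̄(x) ≥ t − ε/3, i.e., g₁ is identically 1 on the support of f̄_{t−ε/3}. -/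
/-- The threshold function `f̄_t : f̄_t(x) = 1` iff `f̄(x) ≥ t`, else `0`. -/
noncomputable def thr {X : Type} (fbar : X → ℝ) (t : ℝ) : X → ℝ :=
  fun x => if t ≤ fbar x then 1 else 0

/-- If `S` is a set of `δ|X|` elements maximizing `f̄`, `g₁ = 1_S`, and the
thresholded `f̄` distinguishes the measure `g` (of expectation `δ`) from
`g₁`, then `g₁` is identically `1` on the support of `f̄_{t-ε/3}`. -/
theorem indicator_one_on_support
    (X : Type) [Fintype X] [DecidableEq X] [Nonempty X]
    (ε δ : ℝ) (hε : 0 < ε) (hδ0 : 0 < δ) (hδ1 : δ ≤ 1)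
    (fbar : X → ℝ) (hf : ∀ x, fbar x ∈ Set.Icc (-1 : ℝ) 1)
    (S : Finset X) (hScard : (S.card : ℝ) = δ * (Fintype.card X : ℝ))
    (hSmax : ∀ x ∈ S, ∀ y ∉ S, fbar y ≤ fbar x)
    (g : X → ℝ) (hg : IsMeasure X g) (hEg : ex X g = δ)
    (t : ℝ)
    (hdist : ip X g (thr fbar t) ≥
      ip X (fun x => if x ∈ S then (1 : ℝ) else 0) (thr fbar (t - ε / 3)) + ε / 3) :
    ∀ x, t - ε / 3 ≤ fbar x → (if x ∈ S then (1 : ℝ) else 0) = 1 := by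
  intro x hx
  by_contra hxS
  have hxS' : x ∉ S := by
    intro h; exact hxS (if_pos h)
  have hcard : (0:ℝ) < (Fintype.card X : ℝ) := by
    exact_mod_cast Fintype.card_pos
  -- thr at t-ε/3 is 1 on S
  have hthr1 : ∀ s ∈ S, thr fbar (t - ε/3) s = 1 := by
    intro s hs
    have : t - ε/3 ≤ fbar s := le_trans hx (hSmax s hs x hxS')
    simp [thr, this]
  -- ip g₁ thr' = δ
  have h1 : ip X (fun y => if y ∈ S then (1 : ℝ) else 0) (thr fbar (t - ε / 3)) = δ := by
    unfold ip
    have : (∑ y, (if y ∈ S then (1 : ℝ) else 0) * thr fbar (t - ε/3) y)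
        = ∑ y ∈ S, thr fbar (t - ε/3) y := by
      rw [show (fun y => (if y ∈ S then (1:ℝ) else 0) * thr fbar (t - ε/3) y)
          = fun y => if y ∈ S then thr fbar (t - ε/3) y else 0 from
          funext fun y => by by_cases h : y ∈ S <;> simp [h],
        ← Finset.sum_filter, Finset.filter_mem_eq_inter, Finset.univ_inter]
    rw [this, Finset.sum_congr rfl hthr1, Finset.sum_const, nsmul_eq_mul, mul_one,
      hScard]
    field_simp
  -- ip g thr ≤ δ
  have h2 : ip X g (thr fbar t) ≤ δ := by
    rw [← hEg]
    unfold ip ex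
    apply div_le_div_of_nonneg_right _ hcard.le
    apply Finset.sum_le_sum
    intro y _
    have hg0 := hg.1 y
    by_cases h : t ≤ fbar y <;> simp [thr, h, hg0]
  have := hdist
  rw [h1] at this
  linarith
end

section
/- Let X be a nonempty finite set, F a finite collection of functions X → [−1,1], F' := F ∪ {−f : f ∈ F}, and ε ∈ (0,1]. Let g : X → ℝ be a measure with E_{x∈X} g(x) = δ and let ν : X → ℝ be a measure with g(x) ≤ ν(x) for all x ∈ X. Suppose that for every bounded measure g₁ : X → [0,1] with E_{x∈X} g₁(x) = δ there exists f ∈ F' with ⟨g − g₁, f⟩ > ε. Then there exist a function f̄ : X → [−1,1] that is a convex combination of functions from F' and a threshold t ∈ [−1 + ε/3, 1] such that ⟨ν, f̄_t⟩ ≥ ⟨1_X, f̄_{t−ε/3}⟩ + ε/3, where 1_X denotes the constant function 1. -/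
open Finset MeasureTheory

theorem exists_mem_stdSimplex_forall_lt_sum_mul {ι : Type*} [Fintype ι] {A : Set (ι → ℝ)}
    {ε : ℝ} (hconv : Convex ℝ A) (hcomp : IsCompact A) (hne : A.Nonempty)
    (h : ∀ a ∈ A, ∃ i, ε < a i) :
    ∃ w ∈ stdSimplex ℝ ι, ∀ a ∈ A, ε < ∑ i, w i * a i := by
  classical
  set B : Set (ι → ℝ) := Set.univ.pi fun _ => Set.Iic ε
  have hdisj : Disjoint A B := Set.disjoint_left.2 fun a ha hb => by
    obtain ⟨i, hi⟩ := h a ha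
    exact (hb i (Set.mem_univ i)).not_gt hi
  obtain ⟨φ, u, v, hAu, huv, hBv⟩ := geometric_hahn_banach_compact_closed hconv hcomp
    (convex_pi fun _ _ => convex_Iic ε) (isClosed_set_pi fun _ _ => isClosed_Iic) hdisj
  set c : ι → ℝ := fun i => φ fun j => if i = j then 1 else 0
  have hφ (y : ι → ℝ) : φ y = ∑ i, y i * c i := φ.toLinearMap.pi_apply_eq_sum_univ y
  have hvε : v < ε * ∑ i, c i := by
    simpa [hφ, mul_sum] using hBv _ fun _ _ => Set.mem_Iic.2 le_rfl
  -- `φ > v` on `B`, which is unbounded below in every coordinate, so no coefficient is positive.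
  have hc (i : ι) : c i ≤ 0 := by
    by_contra! hi
    set M := (ε * ∑ j, c j - v) / c i
    have hM : 0 ≤ M := div_nonneg (by linarith) hi.le
    have hb := hBv (fun j => ε - M * if i = j then 1 else 0) fun j _ => by
      simp only [Set.mem_Iic]
      split_ifs <;> linarith
    simp only [hφ, sub_mul, sum_sub_distrib, ← mul_sum, mul_assoc, ite_mul, one_mul, zero_mul,
      sum_ite_eq, mem_univ, if_true, M, div_mul_cancel₀ _ hi.ne'] at hb
    linarith
  have hkey : ∀ a ∈ A, ε * ∑ i, -c i < ∑ i, -c i * a i := fun a ha => by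
    have := hAu a ha
    simp only [hφ, sum_neg_distrib, neg_mul, mul_neg] at this ⊢
    rw [sum_congr rfl fun i _ => mul_comm (c i) (a i)]
    linarith
  have hs : 0 < ∑ i, -c i := by
    refine (sum_nonneg fun i _ => neg_nonneg.2 (hc i)).lt_of_ne fun hs => ?_
    have hc0 := (sum_eq_zero_iff_of_nonneg fun i _ => neg_nonneg.2 (hc i)).1 hs.symm
    obtain ⟨a, ha⟩ := hne
    simpa [← hs, hc0] using hkey a ha
  refine ⟨fun i => -c i / ∑ j, -c j, ⟨fun i => div_nonneg (neg_nonneg.2 (hc i)) hs.le, ?_⟩,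
    fun a ha => ?_⟩
  · rw [← sum_div, div_self hs.ne']
  · simp only [div_mul_eq_mul_div, ← sum_div, lt_div_iff₀ hs]
    exact hkey a ha

lemma exists_mem_Icc_lt_of_mul_lt_integral {h : ℝ → ℝ} {a b c : ℝ} (hab : a ≤ b)
    (hh : IntervalIntegrable h volume a b) (hlt : c * (b - a) < ∫ t in a..b, h t) :
    ∃ t ∈ Set.Icc a b, c < h t := by
  by_contra! hle
  have := intervalIntegral.integral_mono_on hab hh intervalIntegrable_const hle
  rw [intervalIntegral.integral_const, smul_eq_mul] at this
  linarith

theorem exists_shifted_gap {Wg Wν W1 : ℝ → ℝ} {a η : ℝ} (ha : -1 ≤ a) (ha1 : a ≤ 1)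
    (hη : 0 < η) (hWg : Antitone Wg) (hWν : Antitone Wν) (hW1 : Antitone W1)
    (hWg_le : ∀ t, Wg t ≤ 1) (hWgν : ∀ t, Wg t ≤ Wν t) (hW1_nonneg : ∀ t, 0 ≤ W1 t)
    (hgap : 3 * η < (∫ t in a..1, Wg t) - ∫ t in a..1, W1 t) :
    ∃ t ∈ Set.Icc (a + η) 1, W1 (t - η) + η ≤ Wν t := by
  have hint {W : ℝ → ℝ} (hW : Antitone W) (b c : ℝ) : IntervalIntegrable W volume b c :=
    hW.intervalIntegrable
  have hWg_int (b c : ℝ) (hbc : b ≤ c) : ∫ t in b..c, Wg t ≤ c - b := by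
    simpa using intervalIntegral.integral_mono_on hbc (hint hWg b c) intervalIntegrable_const
      fun t _ => hWg_le t
  have hW1_int (b c : ℝ) (hbc : b ≤ c) : 0 ≤ ∫ t in b..c, W1 t :=
    intervalIntegral.integral_nonneg hbc fun t _ => hW1_nonneg t
  have haη : a + η ≤ 1 := by linarith [hWg_int a 1 ha1, hW1_int a 1 ha1]
  have hWg_split : ∫ t in a..1, Wg t ≤ η + ∫ t in a + η..1, Wν t := by
    rw [← intervalIntegral.integral_add_adjacent_intervals (hint hWg a (a + η)) (hint hWg _ 1)]
    have := hWg_int a (a + η) (by linarith)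
    have := intervalIntegral.integral_mono_on haη (hint hWg _ _) (hint hWν _ _)
      fun t _ => hWgν t
    linarith
  have hW1_shift : ∫ t in a + η..1, W1 (t - η) ≤ ∫ t in a..1, W1 t := by
    rw [intervalIntegral.integral_comp_sub_right, add_sub_cancel_right,
      ← intervalIntegral.integral_add_adjacent_intervals (hint hW1 a (1 - η)) (hint hW1 _ 1)]
    linarith [hW1_int (1 - η) 1 (by linarith)]
  have hshift_int : IntervalIntegrable (fun t => W1 (t - η)) volume (a + η) 1 :=
    (hW1.comp_monotone fun _ _ h => sub_le_sub_right h η).intervalIntegrable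
  have hlen : η * (1 - (a + η)) ≤ 2 * η := by nlinarith
  obtain ⟨t, ht, hlt⟩ := exists_mem_Icc_lt_of_mul_lt_integral (c := η) haη
    ((hint hWν _ _).sub hshift_int)
    (by rw [intervalIntegral.integral_sub (hint hWν _ _) hshift_int]; linarith)
  exact ⟨t, ht, by linarith⟩

lemma thr_nonneg {X : Type} (f : X → ℝ) (t : ℝ) (x : X) : 0 ≤ thr f t x := by
  unfold thr
  split_ifs <;> norm_num

lemma thr_le_one {X : Type} (f : X → ℝ) (t : ℝ) (x : X) : thr f t x ≤ 1 := by
  unfold thr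
  split_ifs <;> norm_num

lemma antitone_thr_apply {X : Type} (f : X → ℝ) (x : X) : Antitone fun t => thr f t x :=
  fun s t hst => by
    simp only [thr]
    split_ifs <;> linarith

lemma integral_thr_apply {X : Type} {f : X → ℝ} {a b : ℝ} (hab : a ≤ b) (x : X)
    (hfx : f x ≤ b) :
    ∫ t in a..b, thr f t x = max (f x - a) 0 := by
  rcases lt_or_ge (f x) a with hlt | hle
  · rw [max_eq_right (by linarith), ← intervalIntegral.integral_zero]
    refine intervalIntegral.integral_congr fun t ht => ?_
    rw [Set.uIcc_of_le hab] at ht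
    simp [thr, not_le.2 (hlt.trans_le ht.1)]
  · have : (fun t => thr f t x) = {t | t ≤ f x}.indicator 1 := by
      ext t
      simp [thr, Set.indicator_apply]
    rw [this, intervalIntegral.integral_indicator ⟨hle, hfx⟩, max_eq_left (by linarith)]
    simp

lemma IsConvexComb.apply_mem {X : Type} {H : Set (X → ℝ)} {fbar : X → ℝ}
    (hfbar : IsConvexComb H fbar) {s : Set ℝ} (hs : Convex ℝ s)
    (hH : ∀ h ∈ H, ∀ x, h x ∈ s) (x : X) : fbar x ∈ s := by
  obtain ⟨T, lam, hT, hlam0, hlam1, rfl⟩ := hfbar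
  exact hs.sum_mem hlam0 hlam1 fun h hh => hH h (hT hh) x

lemma mem_Icc_of_mem_union_neg_image {X : Type} {F : Set (X → ℝ)}
    (hF : ∀ f ∈ F, ∀ x, f x ∈ Set.Icc (-1 : ℝ) 1) :
    ∀ h ∈ F ∪ (fun f => -f) '' F, ∀ x, h x ∈ Set.Icc (-1 : ℝ) 1 := by
  rintro h (hh | ⟨f, hf, rfl⟩) x
  · exact hF h hh x
  · simpa [neg_le, le_neg, and_comm] using hF f hf x

lemma isConvexComb_sum_coe {X : Type} (T : Finset (X → ℝ)) {w : T → ℝ}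
    (hw : w ∈ stdSimplex ℝ T) :
    IsConvexComb ↑T fun x => ∑ i : T, w i * (i : X → ℝ) x := by
  classical
  refine ⟨T, fun h => if hh : h ∈ T then w ⟨h, hh⟩ else 0, subset_rfl,
    fun h hh => by simp only [hh, dif_pos, hw.1], ?_, ?_⟩
  · rw [← sum_coe_sort T]
    simpa using hw.2
  · funext x
    rw [← sum_coe_sort T]
    simp

def boundedMeasuresOfMean (X : Type) [Fintype X] (δ : ℝ) : Set (X → ℝ) :=
  Set.univ.pi (fun _ => Set.Icc 0 1) ∩ ex X ⁻¹' {δ}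

section

variable {X : Type} [Fintype X] {δ : ℝ}

lemma ip_sum_mul (w : X → ℝ) {ι : Type*} (s : Finset ι) (c : ι → ℝ) (h : ι → X → ℝ) :
    ip X w (fun x => ∑ i ∈ s, c i * h i x) = ∑ i ∈ s, c i * ip X w (h i) := by
  simp only [ip, mul_sum, sum_div]
  rw [sum_comm]
  exact sum_congr rfl fun i _ => sum_congr rfl fun x _ => by ring

lemma ip_smul_add_smul_left (u v f : X → ℝ) (p q : ℝ) :
    ip X (p • u + q • v) f = p * ip X u f + q * ip X v f := by
  simp only [ip, Pi.add_apply, Pi.smul_apply, smul_eq_mul, add_mul, sum_add_distrib, mul_assoc,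
    ← mul_sum, add_div, mul_div_assoc]

lemma ip_nonneg {w h : X → ℝ} (hw : ∀ x, 0 ≤ w x) (hh : ∀ x, 0 ≤ h x) :
    0 ≤ ip X w h :=
  div_nonneg (sum_nonneg fun x _ => mul_nonneg (hw x) (hh x)) (Nat.cast_nonneg _)

lemma ip_mono_left {w w' h : X → ℝ} (hww' : ∀ x, w x ≤ w' x) (hh : ∀ x, 0 ≤ h x) :
    ip X w h ≤ ip X w' h :=
  div_le_div_of_nonneg_right
    (sum_le_sum fun x _ => mul_le_mul_of_nonneg_right (hww' x) (hh x)) (Nat.cast_nonneg _)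

lemma ip_le_ex {w h : X → ℝ} (hw : ∀ x, 0 ≤ w x) (hh : ∀ x, h x ≤ 1) :
    ip X w h ≤ ex X w :=
  div_le_div_of_nonneg_right (sum_le_sum fun x _ => mul_le_of_le_one_right (hw x) (hh x))
    (Nat.cast_nonneg _)

lemma ex_nonneg {w : X → ℝ} (hw : ∀ x, 0 ≤ w x) : 0 ≤ ex X w :=
  div_nonneg (sum_nonneg fun x _ => hw x) (Nat.cast_nonneg _)

lemma ex_eq_iff_sum_eq [Nonempty X] {w : X → ℝ} :
    ex X w = δ ↔ ∑ x, w x = δ * Fintype.card X :=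
  div_eq_iff (Nat.cast_ne_zero.2 Fintype.card_ne_zero)

lemma isLinearMap_ex : IsLinearMap ℝ (ex X) where
  map_add u v := by simp only [ex, Pi.add_apply, sum_add_distrib, add_div]
  map_smul c u := by simp only [ex, Pi.smul_apply, smul_eq_mul, ← mul_sum, mul_div_assoc]

lemma continuous_ex : Continuous (ex X) := by
  unfold ex
  fun_prop

lemma mem_boundedMeasuresOfMean {g₁ : X → ℝ} :
    g₁ ∈ boundedMeasuresOfMean X δ ↔
      (∀ x, g₁ x ∈ Set.Icc (0 : ℝ) 1) ∧ ex X g₁ = δ := by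
  simp only [boundedMeasuresOfMean, Set.mem_inter_iff, Set.mem_univ_pi, Set.mem_preimage,
    Set.mem_singleton_iff]

lemma convex_boundedMeasuresOfMean : Convex ℝ (boundedMeasuresOfMean X δ) :=
  (convex_pi fun _ _ => convex_Icc 0 1).inter (convex_hyperplane isLinearMap_ex δ)

lemma isCompact_boundedMeasuresOfMean : IsCompact (boundedMeasuresOfMean X δ) :=
  (isCompact_univ_pi fun _ => isCompact_Icc).inter_right
    (isClosed_singleton.preimage continuous_ex)

lemma const_mem_boundedMeasuresOfMean [Nonempty X] (hδ : δ ∈ Set.Icc (0 : ℝ) 1) :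
    (fun _ => δ) ∈ boundedMeasuresOfMean X δ :=
  mem_boundedMeasuresOfMean.2 ⟨fun _ => hδ, ex_eq_iff_sum_eq.2 (by simp [mul_comm])⟩

theorem exists_isConvexComb_forall_lt_ip (T : Finset (X → ℝ))
    {K : Set (X → ℝ)} (g : X → ℝ) {ε : ℝ} (hconv : Convex ℝ K) (hcomp : IsCompact K)
    (hne : K.Nonempty) (h : ∀ g₁ ∈ K, ∃ f ∈ T, ε < ip X (fun x => g x - g₁ x) f) :
    ∃ fbar, IsConvexComb ↑T fbar ∧ ∀ g₁ ∈ K, ε < ip X (fun x => g x - g₁ x) fbar := by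
  set Φ : (X → ℝ) → T → ℝ := fun g₁ i => ip X (fun x => g x - g₁ x) i
  have hΦ : Convex ℝ (Φ '' K) := by
    rintro _ ⟨u, hu, rfl⟩ _ ⟨v, hv, rfl⟩ p q hp hq hpq
    refine ⟨p • u + q • v, hconv hu hv hp hq hpq, funext fun i => ?_⟩
    have : (fun x => g x - (p • u + q • v) x) = p • (g - u) + q • (g - v) := by
      funext x
      simp only [Pi.add_apply, Pi.smul_apply, Pi.sub_apply, smul_eq_mul]
      linear_combination -g x * hpq
    show ip X (fun x => g x - (p • u + q • v) x) i = p * ip X (g - u) i + q * ip X (g - v) i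
    rw [this, ip_smul_add_smul_left]
  have hcont : Continuous Φ := continuous_pi fun i => by
    simp only [Φ, ip]
    fun_prop
  obtain ⟨w, hw, hlt⟩ := exists_mem_stdSimplex_forall_lt_sum_mul hΦ (hcomp.image hcont)
    (hne.image Φ) <| by
      rintro _ ⟨g₁, hg₁, rfl⟩
      obtain ⟨f, hf, hlt⟩ := h g₁ hg₁
      exact ⟨⟨f, hf⟩, hlt⟩
  refine ⟨_, isConvexComb_sum_coe T hw, fun g₁ hg₁ => ?_⟩
  rw [ip_sum_mul]
  exact hlt _ ⟨g₁, hg₁, rfl⟩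

theorem exists_quantile [Nonempty X] (f : X → ℝ) {r : ℝ} (hr0 : 0 ≤ r)
    (hr : r ≤ Fintype.card X) :
    ∃ x₀, (#{x | f x₀ < f x} : ℝ) ≤ r ∧ r ≤ #{x | f x₀ ≤ f x} := by
  classical
  set S : Finset X := {x | r ≤ #{y | f x ≤ f y}}
  obtain ⟨xmin, -, hxmin⟩ := exists_min_image univ f univ_nonempty
  have hxminS : xmin ∈ S := by
    simpa [S, filter_true_of_mem fun y _ => hxmin y (mem_univ y)] using hr
  obtain ⟨x₀, hx₀S, hx₀⟩ := exists_max_image S f ⟨xmin, hxminS⟩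
  refine ⟨x₀, ?_, (mem_filter.1 hx₀S).2⟩
  by_contra! hlt
  -- the lowest point strictly above level `f x₀` would then lie in `S`
  obtain ⟨x₁, hx₁, hx₁min⟩ := exists_min_image {x | f x₀ < f x} f
    (card_pos.1 (by exact_mod_cast hr0.trans_lt hlt))
  have hx₁S : x₁ ∈ S := mem_filter.2 ⟨mem_univ _, hlt.le.trans <| by
    exact_mod_cast card_le_card fun y hy => mem_filter.2 ⟨mem_univ y, hx₁min y hy⟩⟩
  exact (hx₀ x₁ hx₁S).not_gt (mem_filter.1 hx₁).2

theorem exists_weight_above_level (f : X → ℝ) {a r : ℝ} (hlt : (#{x | a < f x} : ℝ) ≤ r)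
    (hle : r ≤ #{x | a ≤ f x}) :
    ∃ g₁ : X → ℝ, (∀ x, g₁ x ∈ Set.Icc (0 : ℝ) 1) ∧ ∑ x, g₁ x = r ∧
      ∀ x, g₁ x * (f x - a) = max (f x - a) 0 := by
  classical
  have hcard : (#{x | a ≤ f x} : ℝ) = #{x | a < f x} + #{x | f x = a} := by
    simp only [natCast_card_filter, ← sum_add_distrib]
    refine sum_congr rfl fun x _ => ?_
    split_ifs <;> grind
  -- On the level set `f = a` the weight `θ` makes up the missing mass; if that set is empty,
  -- nothing is missing and `θ = 0` by the convention `x / 0 = 0`.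
  set θ : ℝ := (r - #{x | a < f x}) / #{x | f x = a}
  have hθ : (#{x | f x = a} : ℝ) * θ = r - #{x | a < f x} := by
    rcases eq_or_ne (#{x | f x = a} : ℝ) 0 with h | h
    · rw [h, zero_mul]
      linarith
    · exact mul_div_cancel₀ _ h
  refine ⟨fun x => (if a < f x then 1 else 0) + θ * if f x = a then 1 else 0,
    fun x => ?_, ?_, fun x => ?_⟩
  · have hθ0 : 0 ≤ θ := div_nonneg (by linarith) (Nat.cast_nonneg _)
    have hθ1 : θ ≤ 1 := div_le_one_of_le₀ (by linarith) (Nat.cast_nonneg _)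
    simp only [Set.mem_Icc]
    split_ifs <;> grind
  · rw [sum_add_distrib, ← mul_sum, ← natCast_card_filter, ← natCast_card_filter, mul_comm,
      hθ]
    ring
  · dsimp only
    split_ifs <;> grind

lemma ip_sub_le_of_mul_eq_max {g g₁ f : X → ℝ} {a : ℝ} (hg : ∀ x, 0 ≤ g x)
    (hsum : ∑ x, g x = ∑ x, g₁ x) (hg₁ : ∀ x, g₁ x * (f x - a) = max (f x - a) 0) :
    ip X (fun x => g x - g₁ x) f ≤
      ip X g (fun x => max (f x - a) 0) - ip X (fun _ => 1) fun x => max (f x - a) 0 := by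
  rw [ip, ip, ip, ← sub_div, ← sum_sub_distrib]
  refine div_le_div_of_nonneg_right ?_ (Nat.cast_nonneg _)
  calc ∑ x, (g x - g₁ x) * f x
      = ∑ x, ((g x * (f x - a) - max (f x - a) 0) + a * (g x - g₁ x)) :=
        sum_congr rfl fun x _ => by rw [← hg₁ x]; ring
    _ = ∑ x, (g x * (f x - a) - max (f x - a) 0) := by
        rw [sum_add_distrib, ← mul_sum, sum_sub_distrib (f := g), hsum, sub_self, mul_zero,
          add_zero]
    _ ≤ ∑ x, (g x * max (f x - a) 0 - 1 * max (f x - a) 0) :=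
        sum_le_sum fun x _ => by rw [one_mul]; gcongr; exacts [hg x, le_max_left _ _]

lemma antitone_ip_thr {w : X → ℝ} (hw : ∀ x, 0 ≤ w x) (f : X → ℝ) :
    Antitone fun t => ip X w (thr f t) := fun _ _ hst =>
  div_le_div_of_nonneg_right
    (sum_le_sum fun x _ => mul_le_mul_of_nonneg_left (antitone_thr_apply f x hst) (hw x))
    (Nat.cast_nonneg _)

lemma integral_ip_thr (w : X → ℝ) {f : X → ℝ} {a b : ℝ} (hab : a ≤ b)
    (hf : ∀ x, f x ≤ b) :
    ∫ t in a..b, ip X w (thr f t) = ip X w fun x => max (f x - a) 0 := by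
  simp only [ip]
  rw [intervalIntegral.integral_div, intervalIntegral.integral_finsetSum fun x _ =>
    ((antitone_thr_apply f x).intervalIntegrable).const_mul (w x)]
  simp only [intervalIntegral.integral_const_mul, integral_thr_apply hab _ (hf _)]

end

theorem threshold_distinguishes_nu_general
    (X : Type) [Fintype X] [Nonempty X] (F : Finset (X → ℝ))
    (hF : ∀ f ∈ F, ∀ x, f x ∈ Set.Icc (-1 : ℝ) 1)
    (ε δ : ℝ) (hε0 : 0 < ε)
    (g : X → ℝ) (hg : IsMeasure X g) (hgδ : ex X g = δ)
    (ν : X → ℝ) (hν : IsMeasure X ν) (hgν : ∀ x, g x ≤ ν x)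
    (H : ∀ g₁ : X → ℝ, IsMeasure X g₁ → (∀ x, 0 ≤ g₁ x ∧ g₁ x ≤ 1) →
      ex X g₁ = δ →
      ∃ f ∈ (↑F : Set (X → ℝ)) ∪ (fun f => -f) '' (↑F : Set (X → ℝ)),
        ε < ip X (fun x => g x - g₁ x) f) :
    ∃ (fbar : X → ℝ) (t : ℝ),
      (∀ x, fbar x ∈ Set.Icc (-1 : ℝ) 1) ∧
      IsConvexComb ((↑F : Set (X → ℝ)) ∪ (fun f => -f) '' (↑F : Set (X → ℝ))) fbar ∧
      -1 + ε / 3 ≤ t ∧ t ≤ 1 ∧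
      ip X ν (thr fbar t) ≥ ip X (fun _ => 1) (thr fbar (t - ε / 3)) + ε / 3 := by
  classical
  have hδ : δ ∈ Set.Icc (0 : ℝ) 1 := hgδ ▸ ⟨ex_nonneg hg.1, hg.2⟩
  have hF' : (↑(F ∪ F.image (-·)) : Set (X → ℝ)) = ↑F ∪ (fun f => -f) '' ↑F := by
    push_cast
    rfl
  obtain ⟨fbar, hconv, hfbar⟩ := exists_isConvexComb_forall_lt_ip (F ∪ F.image (-·)) g
    convex_boundedMeasuresOfMean isCompact_boundedMeasuresOfMean
    ⟨_, const_mem_boundedMeasuresOfMean hδ⟩ fun g₁ hg₁ => by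
      obtain ⟨hg₁01, hg₁δ⟩ := mem_boundedMeasuresOfMean.1 hg₁
      obtain ⟨f, hf, hlt⟩ := H g₁ ⟨fun x => (hg₁01 x).1, hg₁δ ▸ hδ.2⟩ hg₁01 hg₁δ
      exact ⟨f, by rwa [← mem_coe, hF'], hlt⟩
  rw [hF'] at hconv
  have hbound := hconv.apply_mem (convex_Icc (-1) 1) (mem_Icc_of_mem_union_neg_image hF)
  obtain ⟨x₀, hlt, hle⟩ := exists_quantile fbar (mul_nonneg hδ.1 (Nat.cast_nonneg _))
    (mul_le_of_le_one_left (Nat.cast_nonneg _) hδ.2)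
  obtain ⟨g₁, hg₁01, hg₁sum, hg₁max⟩ := exists_weight_above_level fbar hlt hle
  have hg₁K := mem_boundedMeasuresOfMean.2 ⟨hg₁01, ex_eq_iff_sum_eq.2 hg₁sum⟩
  have hgap := (hfbar g₁ hg₁K).trans_le
    (ip_sub_le_of_mul_eq_max hg.1 (by rw [hg₁sum, ← ex_eq_iff_sum_eq, hgδ]) hg₁max)
  simp only [← integral_ip_thr _ (hbound x₀).2 fun x => (hbound x).2] at hgap
  obtain ⟨t, ⟨ht, ht1⟩, hνt⟩ := exists_shifted_gap (η := ε / 3) (hbound x₀).1 (hbound x₀).2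
    (by positivity) (antitone_ip_thr hg.1 fbar) (antitone_ip_thr hν.1 fbar)
    (antitone_ip_thr (fun _ => zero_le_one) fbar)
    (fun t => (ip_le_ex hg.1 (thr_le_one fbar t)).trans hg.2)
    (fun t => ip_mono_left hgν (thr_nonneg fbar t))
    (fun t => ip_nonneg (fun _ => zero_le_one) (thr_nonneg fbar t)) (by linarith)
  exact ⟨fbar, t, hbound, hconv, by linarith [(hbound x₀).1], ht1, by linarith⟩

/-- Steps 1 and 2 combined: if every dense bounded measure is distinguished
from `g` by some `f ∈ F'`, then some threshold of a convex combination of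
functions from `F'` distinguishes `ν` from the constant function `1`. -/
theorem threshold_distinguishes_nu
    (X : Type) [Fintype X] [Nonempty X] (F : Finset (X → ℝ))
    (hF : ∀ f ∈ F, ∀ x, f x ∈ Set.Icc (-1 : ℝ) 1)
    (ε δ : ℝ) (hε0 : 0 < ε) (hε1 : ε ≤ 1)
    (g : X → ℝ) (hg : IsMeasure X g) (hgδ : ex X g = δ)
    (ν : X → ℝ) (hν : IsMeasure X ν) (hgν : ∀ x, g x ≤ ν x)
    (H : ∀ g₁ : X → ℝ, IsMeasure X g₁ → (∀ x, 0 ≤ g₁ x ∧ g₁ x ≤ 1) →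
      ex X g₁ = δ →
      ∃ f ∈ (↑F : Set (X → ℝ)) ∪ (fun f => -f) '' (↑F : Set (X → ℝ)),
        ε < ip X (fun x => g x - g₁ x) f) :
    ∃ (fbar : X → ℝ) (t : ℝ),
      (∀ x, fbar x ∈ Set.Icc (-1 : ℝ) 1) ∧
      IsConvexComb ((↑F : Set (X → ℝ)) ∪ (fun f => -f) '' (↑F : Set (X → ℝ))) fbar ∧
      -1 + ε / 3 ≤ t ∧ t ≤ 1 ∧
      ip X ν (thr fbar t) ≥ ip X (fun _ => 1) (thr fbar (t - ε / 3)) + ε / 3 :=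
  threshold_distinguishes_nu_general X F hF ε δ hε0 g hg hgδ ν hν hgν H
end

section
/- For every α ∈ (0,1] and β ∈ (0,1] there exist d ∈ ℕ and C > 0 such that for every t ∈ [−1 + α, 1] there is a real polynomial p of degree at most d, all of whose coefficients are bounded in absolute value by C, satisfying: (1) p(z) ∈ [0,1] for all z ∈ [−1,1]; (2) p(z) ∈ [0,β] for all z ∈ [−1, t−α]; and (3) p(z) ∈ [1−β, 1] for all z ∈ [t, 1]. -/
open Polynomial Finset

lemma bern_eval_nonneg (n ν : ℕ) {x : ℝ} (h0 : 0 ≤ x) (h1 : x ≤ 1) :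
    0 ≤ (bernsteinPolynomial ℝ n ν).eval x := by
  rw [bernsteinPolynomial]
  simp only [eval_mul, eval_pow, eval_natCast, eval_X, eval_sub, eval_one]
  have h2 : (0:ℝ) ≤ 1 - x := by linarith
  positivity

lemma bern_sum (n : ℕ) (x : ℝ) :
    ∑ ν ∈ range (n+1), (bernsteinPolynomial ℝ n ν).eval x = 1 := by
  have := congrArg (Polynomial.eval x) (bernsteinPolynomial.sum ℝ n)
  simpa [Polynomial.eval_finset_sum] using this

lemma bern_var (n : ℕ) (x : ℝ) :
    ∑ ν ∈ range (n+1), ((n:ℝ)*x - ν)^2 * (bernsteinPolynomial ℝ n ν).eval x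
      = (n:ℝ) * x * (1 - x) := by
  have := congrArg (Polynomial.eval x) (bernsteinPolynomial.variance ℝ n)
  simpa [Polynomial.eval_finset_sum, nsmul_eq_mul] using this

lemma bern_cheb {n : ℕ} (hn : 0 < n) {x δ : ℝ} (hx0 : 0 ≤ x) (hx1 : x ≤ 1) (hδ : 0 < δ)
    {S : Finset ℕ} (hS : S ⊆ range (n+1))
    (h : ∀ ν ∈ S, ((n:ℝ) * δ)^2 ≤ ((n:ℝ) * x - ν)^2) :
    ∑ ν ∈ S, (bernsteinPolynomial ℝ n ν).eval x ≤ 1 / (4 * n * δ^2) := by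
  have hnR : (0:ℝ) < n := Nat.cast_pos.2 hn
  have hnδ : (0:ℝ) < ((n:ℝ)*δ)^2 := by positivity
  have step1 : ∑ ν ∈ S, (bernsteinPolynomial ℝ n ν).eval x
      ≤ ∑ ν ∈ S, (((n:ℝ)*x - ν)^2 / ((n:ℝ)*δ)^2) * (bernsteinPolynomial ℝ n ν).eval x := by
    refine Finset.sum_le_sum fun ν hν => ?_
    have hb := bern_eval_nonneg n ν hx0 hx1
    have h1 : (1:ℝ) ≤ ((n:ℝ)*x - ν)^2 / ((n:ℝ)*δ)^2 := (one_le_div hnδ).2 (h ν hν)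
    nlinarith
  have step2 : ∑ ν ∈ S, (((n:ℝ)*x - ν)^2 / ((n:ℝ)*δ)^2) * (bernsteinPolynomial ℝ n ν).eval x
      ≤ ∑ ν ∈ range (n+1),
          (((n:ℝ)*x - ν)^2 / ((n:ℝ)*δ)^2) * (bernsteinPolynomial ℝ n ν).eval x := by
    refine Finset.sum_le_sum_of_subset_of_nonneg hS fun ν _ _ => ?_
    have hb := bern_eval_nonneg n ν hx0 hx1
    positivity
  have step3 : ∑ ν ∈ range (n+1),
        (((n:ℝ)*x - ν)^2 / ((n:ℝ)*δ)^2) * (bernsteinPolynomial ℝ n ν).eval x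
      = ((n:ℝ) * x * (1-x)) / ((n:ℝ)*δ)^2 := by
    rw [← bern_var n x, Finset.sum_div]
    exact Finset.sum_congr rfl fun ν _ => by ring
  have hx : (n:ℝ) * x * (1-x) / ((n:ℝ)*δ)^2 ≤ 1 / (4 * n * δ^2) := by
    rw [div_le_div_iff₀ hnδ (by positivity)]
    nlinarith [sq_nonneg (x - 1/2), sq_nonneg ((n:ℝ)*δ)]
  linarith

lemma bern_natDegree_le (n ν : ℕ) (h : ν ≤ n) :
    (bernsteinPolynomial ℝ n ν).natDegree ≤ n := by
  rw [bernsteinPolynomial]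
  refine natDegree_mul_le.trans ?_
  have h1 : ((Nat.choose n ν : ℝ[X]) * X ^ ν).natDegree ≤ ν := by
    refine natDegree_mul_le.trans ?_
    simp
  have h2 : ((1 - X : ℝ[X]) ^ (n - ν)).natDegree ≤ n - ν := by
    refine natDegree_pow_le.trans ?_
    have : (1 - X : ℝ[X]).natDegree ≤ 1 := by compute_degree
    nlinarith [Nat.sub_le n ν]
  omega

/-- A quantitative special case of the Weierstrass approximation theorem:
a polynomial of bounded degree with bounded coefficients, mapping `[-1,1]`
into `[0,1]`, that is at most `β` below the threshold window and at least
`1-β` above the threshold `t`. -/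
theorem polynomial_threshold_approximation :
    ∀ α β : ℝ, 0 < α → α ≤ 1 → 0 < β → β ≤ 1 →
      ∃ (d : ℕ) (C : ℝ), 0 < C ∧
        ∀ t : ℝ, -1 + α ≤ t → t ≤ 1 →
          ∃ p : Polynomial ℝ,
            p.natDegree ≤ d ∧
            (∀ i, |p.coeff i| ≤ C) ∧
            (∀ z : ℝ, -1 ≤ z → z ≤ 1 → p.eval z ∈ Set.Icc (0 : ℝ) 1) ∧
            (∀ z : ℝ, -1 ≤ z → z ≤ t - α → p.eval z ∈ Set.Icc (0 : ℝ) β) ∧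
            (∀ z : ℝ, t ≤ z → z ≤ 1 → p.eval z ∈ Set.Icc (1 - β) 1) := by
  intro α β hα hα1 hβ hβ1
  set n : ℕ := ⌈4/(α^2*β)⌉₊ with hn_def
  have hn4 : 4/(α^2*β) ≤ (n:ℝ) := Nat.le_ceil _
  have hnpos : 0 < n := Nat.ceil_pos.2 (by positivity)
  have hnR : (0:ℝ) < n := Nat.cast_pos.2 hnpos
  -- key numeric bound
  have hkey : 1 / (4 * (n:ℝ) * (α/4)^2) ≤ β := by
    have h4 : (4:ℝ) ≤ (n:ℝ) * (α^2*β) := (div_le_iff₀ (by positivity)).1 hn4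
    rw [div_le_iff₀ (by positivity)]
    nlinarith
  set L : ℝ[X] := Polynomial.C (1/2 : ℝ) * (X + 1) with hL_def
  have hLeval : ∀ z : ℝ, L.eval z = (z+1)/2 := by intro z; simp [hL_def]; ring
  have hLdeg : L.natDegree ≤ 1 := by rw [hL_def]; compute_degree
  set P : ℕ → ℝ[X] :=
    fun m => (∑ ν ∈ Finset.Ico m (n+1), bernsteinPolynomial ℝ n ν).comp L with hP_def
  have hPdeg : ∀ m, (P m).natDegree ≤ n := by
    intro m
    refine natDegree_comp_le.trans ?_
    have hq : (∑ ν ∈ Finset.Ico m (n+1), bernsteinPolynomial ℝ n ν).natDegree ≤ n :=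
      natDegree_sum_le_of_forall_le _ _ fun ν hν =>
        bern_natDegree_le n ν (by have := (Finset.mem_Ico.1 hν).2; omega)
    calc (∑ ν ∈ Finset.Ico m (n+1), bernsteinPolynomial ℝ n ν).natDegree * L.natDegree
        ≤ n * 1 := Nat.mul_le_mul hq hLdeg
      _ = n := by omega
  have hPeval : ∀ m (z : ℝ),
      (P m).eval z = ∑ ν ∈ Finset.Ico m (n+1), (bernsteinPolynomial ℝ n ν).eval ((z+1)/2) := by
    intro m z
    rw [hP_def]
    simp only [eval_comp, hLeval, Polynomial.eval_finset_sum]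
  set C : ℝ := 1 + ∑ m ∈ range (n+2), ∑ i ∈ range (n+1), |(P m).coeff i| with hC_def
  have hsum_nonneg : 0 ≤ ∑ m ∈ range (n+2), ∑ i ∈ range (n+1), |(P m).coeff i| :=
    Finset.sum_nonneg fun _ _ => Finset.sum_nonneg fun _ _ => abs_nonneg _
  refine ⟨n, C, by rw [hC_def]; linarith, ?_⟩
  intro t ht1 ht2
  set xt : ℝ := (t+1)/2 with hxt_def
  have hxt1 : α/2 ≤ xt := by rw [hxt_def]; linarith
  have hxt2 : xt ≤ 1 := by rw [hxt_def]; linarith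
  set m : ℕ := ⌈(n:ℝ)*(xt - α/4)⌉₊ with hm_def
  have harg : (0:ℝ) ≤ (n:ℝ)*(xt - α/4) := by nlinarith
  have hm1 : (n:ℝ)*(xt - α/4) ≤ m := Nat.le_ceil _
  have hm2 : (m:ℝ) < (n:ℝ)*(xt - α/4) + 1 := Nat.ceil_lt_add_one harg
  have hmn : m ≤ n := by
    rw [hm_def]
    exact Nat.ceil_le.2 (by push_cast; nlinarith)
  refine ⟨P m, hPdeg m, ?_, ?_, ?_, ?_⟩
  · -- coefficient bounds
    intro i
    by_cases hi : i ≤ n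
    · have h1 : |(P m).coeff i| ≤ ∑ i' ∈ range (n+1), |(P m).coeff i'| :=
        Finset.single_le_sum (f := fun i' => |(P m).coeff i'|)
          (fun _ _ => abs_nonneg _) (Finset.mem_range.2 (by omega))
      have h2 : ∑ i' ∈ range (n+1), |(P m).coeff i'|
          ≤ ∑ m' ∈ range (n+2), ∑ i' ∈ range (n+1), |(P m').coeff i'| :=
        Finset.single_le_sum
          (f := fun m' => ∑ i' ∈ range (n+1), |(P m').coeff i'|)
          (fun _ _ => Finset.sum_nonneg fun _ _ => abs_nonneg _)
          (Finset.mem_range.2 (by omega))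
      rw [hC_def]; linarith
    · have : (P m).coeff i = 0 :=
        coeff_eq_zero_of_natDegree_lt (lt_of_le_of_lt (hPdeg m) (by omega))
      rw [this, abs_zero, hC_def]; linarith
  all_goals intro z hz1 hz2
  · -- values in [0,1] on [-1,1]
    set x : ℝ := (z+1)/2 with hx_def
    have hx0 : 0 ≤ x := by rw [hx_def]; linarith
    have hx1 : x ≤ 1 := by rw [hx_def]; linarith
    rw [hPeval]
    constructor
    · exact Finset.sum_nonneg fun ν _ => bern_eval_nonneg n ν hx0 hx1
    · calc ∑ ν ∈ Finset.Ico m (n+1), (bernsteinPolynomial ℝ n ν).eval x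
          ≤ ∑ ν ∈ range (n+1), (bernsteinPolynomial ℝ n ν).eval x := by
            refine Finset.sum_le_sum_of_subset_of_nonneg ?_
              (fun ν _ _ => bern_eval_nonneg n ν hx0 hx1)
            rw [Finset.range_eq_Ico]
            exact Finset.Ico_subset_Ico (Nat.zero_le _) le_rfl
        _ = 1 := bern_sum n x
  · -- small below the window
    set x : ℝ := (z+1)/2 with hx_def
    have hx0 : 0 ≤ x := by rw [hx_def]; linarith
    have hx1 : x ≤ 1 := by rw [hx_def]; nlinarith
    have hxle : x ≤ xt - α/2 := by rw [hx_def, hxt_def]; linarith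
    rw [hPeval]
    constructor
    · exact Finset.sum_nonneg fun ν _ => bern_eval_nonneg n ν hx0 hx1
    · refine le_trans (bern_cheb hnpos hx0 hx1 (by positivity : (0:ℝ) < α/4)
        (by rw [Finset.range_eq_Ico]; exact Finset.Ico_subset_Ico (Nat.zero_le _) le_rfl)
        ?_) hkey
      intro ν hν
      have hνm : m ≤ ν := (Finset.mem_Ico.1 hν).1
      have hνm' : (m:ℝ) ≤ ν := Nat.cast_le.2 hνm
      have hx' : (n:ℝ)*x ≤ (n:ℝ)*(xt - α/2) := mul_le_mul_of_nonneg_left hxle hnR.le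
      have h1 : (n:ℝ)*(α/4) ≤ (ν:ℝ) - (n:ℝ)*x := by linarith only [hm1, hx', hνm']
      refine le_trans (pow_le_pow_left₀ (by positivity) h1 2) (le_of_eq (by ring))
  · -- large above the threshold
    set x : ℝ := (z+1)/2 with hx_def
    have hx0 : 0 ≤ x := by rw [hx_def]; linarith
    have hx1 : x ≤ 1 := by rw [hx_def]; linarith
    have hxge : xt ≤ x := by rw [hx_def, hxt_def]; linarith
    have hsplit : ∑ ν ∈ range m, (bernsteinPolynomial ℝ n ν).eval x
        + ∑ ν ∈ Finset.Ico m (n+1), (bernsteinPolynomial ℝ n ν).eval x = 1 := by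
      rw [Finset.sum_range_add_sum_Ico _ (by omega : m ≤ n+1)]
      exact bern_sum n x
    have hlow : ∑ ν ∈ range m, (bernsteinPolynomial ℝ n ν).eval x ≤ β := by
      refine le_trans (bern_cheb hnpos hx0 hx1 (by positivity : (0:ℝ) < α/4)
        (Finset.range_subset_range.2 (by omega)) ?_) hkey
      intro ν hν
      have hνm : ν < m := Finset.mem_range.1 hν
      have hνm' : (ν:ℝ) ≤ (m:ℝ) - 1 := by
        have : (ν:ℝ) + 1 ≤ (m:ℝ) := by exact_mod_cast hνm
        linarith
      have hx' : (n:ℝ)*xt ≤ (n:ℝ)*x := mul_le_mul_of_nonneg_left hxge hnR.le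
      have h1 : (n:ℝ)*(α/4) ≤ (n:ℝ)*x - (ν:ℝ) := by linarith only [hm2, hx', hνm']
      exact pow_le_pow_left₀ (by positivity) h1 2
    rw [hPeval]
    constructor
    · linarith
    · calc ∑ ν ∈ Finset.Ico m (n+1), (bernsteinPolynomial ℝ n ν).eval x
          ≤ ∑ ν ∈ range (n+1), (bernsteinPolynomial ℝ n ν).eval x := by
            refine Finset.sum_le_sum_of_subset_of_nonneg ?_
              (fun ν _ _ => bern_eval_nonneg n ν hx0 hx1)
            rw [Finset.range_eq_Ico]
            exact Finset.Ico_subset_Ico (Nat.zero_le _) le_rfl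
        _ = 1 := bern_sum n x
end

section
/- Let X be a nonempty finite set, ε ∈ (0,1], t ∈ ℝ, and let f̄ : X → [−1,1]. Let ν : X → ℝ be a measure and let p : ℝ → ℝ be a polynomial such that for every x ∈ X, f̄_t(x) − ε/12 ≤ p(f̄(x)) ≤ f̄_{t−ε/3}(x) + ε/12. If ⟨ν, f̄_t⟩ ≥ ⟨1_X, f̄_{t−ε/3}⟩ + ε/3, where 1_X denotes the constant function 1, then ⟨ν − 1_X, p∘f̄⟩ ≥ ε/6. -/
/-- If the polynomial `p` approximates the threshold functions of `f̄` and the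
threshold `f̄_t` distinguishes `ν` from the constant `1` with advantage `ε/3`,
then `p ∘ f̄` distinguishes `ν` from `1` with advantage `ε/6`. -/
theorem polynomial_distinguisher
    (X : Type) [Fintype X] [Nonempty X]
    (ε t : ℝ) (hε0 : 0 < ε) (hε1 : ε ≤ 1)
    (fbar : X → ℝ) (hf : ∀ x, fbar x ∈ Set.Icc (-1 : ℝ) 1)
    (ν : X → ℝ) (hν : IsMeasure X ν)
    (p : Polynomial ℝ)
    (hp : ∀ x, thr fbar t x - ε / 12 ≤ p.eval (fbar x) ∧
      p.eval (fbar x) ≤ thr fbar (t - ε / 3) x + ε / 12)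
    (hdist : ip X ν (thr fbar t) ≥
      ip X (fun _ => 1) (thr fbar (t - ε / 3)) + ε / 3) :
    ip X (fun x => ν x - 1) (fun x => p.eval (fbar x)) ≥ ε / 6 := by
  obtain ⟨hν0, hνE⟩ := hν
  have hn : 0 < (Fintype.card X : ℝ) := by
    exact_mod_cast Fintype.card_pos
  have hsum : ∑ x, ν x ≤ (Fintype.card X : ℝ) := by
    rw [ex, div_le_one hn] at hνE
    exact hνE
  have key : ∑ x, (ν x - 1) * p.eval (fbar x) ≥
      (∑ x, ν x * thr fbar t x) - (∑ x, thr fbar (t - ε / 3) x)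
        - ε / 12 * ∑ x, ν x - ε / 12 * Fintype.card X := by
    have h1 : ∀ x, (ν x - 1) * p.eval (fbar x) ≥
        ν x * thr fbar t x - thr fbar (t - ε / 3) x - ε / 12 * ν x - ε / 12 := by
      intro x
      obtain ⟨ha, hb⟩ := hp x
      have h0 := hν0 x
      nlinarith [mul_le_mul_of_nonneg_left ha h0]
    calc ∑ x, (ν x - 1) * p.eval (fbar x)
        ≥ ∑ x, (ν x * thr fbar t x - thr fbar (t - ε / 3) x - ε / 12 * ν x - ε / 12) :=
          Finset.sum_le_sum (fun x _ => h1 x)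
      _ = (∑ x, ν x * thr fbar t x) - (∑ x, thr fbar (t - ε / 3) x)
            - ε / 12 * ∑ x, ν x - ε / 12 * Fintype.card X := by
          rw [Finset.sum_sub_distrib, Finset.sum_sub_distrib, Finset.sum_sub_distrib,
            ← Finset.mul_sum]
          simp [Finset.sum_const, nsmul_eq_mul]
          ring
  have hkey2 : ∑ x, (ν x - 1) * p.eval (fbar x) ≥
      (∑ x, ν x * thr fbar t x) - (∑ x, thr fbar (t - ε / 3) x)
        - ε / 6 * Fintype.card X := by
    nlinarith [hsum]
  rw [ip, ip, ge_iff_le] at hdist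
  simp only [one_mul] at hdist
  have hd : (∑ x, thr fbar (t - ε / 3) x) + ε / 3 * Fintype.card X ≤
      ∑ x, ν x * thr fbar t x := by
    have h := mul_le_mul_of_nonneg_right hdist (le_of_lt hn)
    rw [add_mul, div_mul_cancel₀ _ hn.ne', div_mul_cancel₀ _ hn.ne'] at h
    exact h
  rw [ip, ge_iff_le, le_div_iff₀ hn]
  nlinarith [hkey2, hd]
end

section
/- Let X be a nonempty finite set, H a finite collection of functions X → [−1,1], and let f̄ = ∑_{h∈H} λ_h h be a convex combination of functions from H (λ_h ≥ 0, ∑_{h∈H} λ_h = 1). Let w : X → ℝ, k ∈ ℕ, and ε' > 0. If ⟨w, f̄^k⟩ ≥ ε', where f̄^k denotes the pointwise k-th power of f̄, then there exist functions f₁, …, f_k ∈ H such that ⟨w, ∏_{i=1}^{k} f_i⟩ ≥ ε', where ∏_{i=1}^{k} f_i denotes the pointwise product. -/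
/-- The averaging step: if a convex combination `f̄` of functions from `H`
satisfies `⟨w, f̄^k⟩ ≥ ε'`, then some product of `k` functions from `H`
satisfies the same bound. -/
theorem product_distinguisher
    (X : Type) [Fintype X] [Nonempty X]
    (H : Finset (X → ℝ)) (hH : ∀ h ∈ H, ∀ x, h x ∈ Set.Icc (-1 : ℝ) 1)
    (lam : (X → ℝ) → ℝ) (hlam0 : ∀ h ∈ H, 0 ≤ lam h)
    (hlam1 : ∑ h ∈ H, lam h = 1)
    (fbar : X → ℝ) (hfbar : fbar = fun x => ∑ h ∈ H, lam h * h x)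
    (w : X → ℝ) (k : ℕ) (ε' : ℝ) (hε' : 0 < ε')
    (hip : ip X w (fun x => fbar x ^ k) ≥ ε') :
    ∃ fs : Fin k → (X → ℝ), (∀ i, fs i ∈ H) ∧
      ip X w (fun x => ∏ i, fs i x) ≥ ε' := by
  classical
  set P := Fintype.piFinset (fun _ : Fin k => H) with hP
  -- expand the power of the sum
  have key : ip X w (fun x => fbar x ^ k)
      = ∑ p ∈ P, (∏ i, lam (p i)) * ip X w (fun x => ∏ i, p i x) := by
    simp only [ip, ← mul_div_assoc, ← Finset.sum_div]
    congr 1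
    calc ∑ x, w x * fbar x ^ k
        = ∑ x, ∑ p ∈ P, w x * ((∏ i, lam (p i)) * ∏ i, p i x) := by
          refine Finset.sum_congr rfl fun x _ => ?_
          rw [hfbar]
          simp only [Finset.sum_pow', ← Finset.prod_mul_distrib, Finset.mul_sum, hP]
      _ = ∑ p ∈ P, (∏ i, lam (p i)) * ∑ x, w x * ∏ i, p i x := by
          rw [Finset.sum_comm]
          refine Finset.sum_congr rfl fun p _ => ?_
          rw [Finset.mul_sum]
          refine Finset.sum_congr rfl fun x _ => by ring
  -- coefficients sum to 1
  have csum : ∑ p ∈ P, (∏ i, lam (p i)) = 1 := by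
    rw [hP, Finset.sum_prod_piFinset, hlam1, Finset.prod_const_one]
  have cnn : ∀ p ∈ P, 0 ≤ ∏ i, lam (p i) := fun p hp =>
    Finset.prod_nonneg fun i _ => hlam0 _ (Fintype.mem_piFinset.mp hp i)
  by_contra hcon
  push_neg at hcon
  -- there is a coefficient that is positive
  obtain ⟨h0, h0H, h0pos⟩ : ∃ h ∈ H, 0 < lam h := by
    by_contra hno
    push_neg at hno
    have : ∑ h ∈ H, lam h ≤ 0 :=
      Finset.sum_nonpos fun h hh => hno h hh
    linarith [hlam1 ▸ this]
  have hp0 : (fun _ : Fin k => h0) ∈ P := Fintype.mem_piFinset.mpr fun _ => h0H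
  have hlt : ∀ p ∈ P, ip X w (fun x => ∏ i, p i x) < ε' := fun p hp =>
    hcon p (fun i => Fintype.mem_piFinset.mp hp i)
  have hsumlt : ∑ p ∈ P, (∏ i, lam (p i)) * ip X w (fun x => ∏ i, p i x)
      < ∑ p ∈ P, (∏ i, lam (p i)) * ε' := by
    refine Finset.sum_lt_sum (fun p hp => ?_) ⟨_, hp0, ?_⟩
    · exact mul_le_mul_of_nonneg_left (le_of_lt (hlt p hp)) (cnn p hp)
    · have hcpos : 0 < ∏ i : Fin k, lam h0 := Finset.prod_pos fun _ _ => h0pos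
      exact mul_lt_mul_of_pos_left (hlt _ hp0) hcpos
  rw [← Finset.sum_mul, csum, one_mul] at hsumlt
  rw [key] at hip
  linarith
end
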